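/- arXiv:1707.00829 — 4 statements merged into one kernel-verified Lean document; each statement's English description precedes it below -/
import Mathlib

section
/- Let f:[0,∞)→ℝ be a locally bounded measurable function with f(t) = O(P{ξ>t}) as t→∞, and assume P{ξ>t} ~ t^{−α} ℓ_ξ(t) as t→∞ for some α∈(0,1) and slowly varying ℓ_ξ. Then for every l∈ℕ, E[(Σ_{k≥0} |f(t−S_k)| 1{S_k ≤ t})^l] = O(1) as t→∞, i.e. the l-th moments of the renewal shot noise process with response |f| stay bounded. -/
/-!
Since `P{ξ > t}` is regularly varying it never vanishes, so local boundedness of `f` together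
with `f = O(P{ξ > ·})` gives `|f u| ≤ K · P{ξ > u}` on `[0, ∞)`. It therefore suffices to show
that `V(t) = ∑ₖ P{ξ > t - Sₖ} 1{Sₖ ≤ t}` satisfies `E V(t)^l ≤ l!`. Expanding `V(t)^l` over
ordered indices `k₁ ≤ ⋯ ≤ kₗ` costs at most a factor `l!`; conditioning on `S_{k₁}`, which is
independent of the later increments, turns the inner ordered sum into the same quantity for the
walk restarted at `k₁`, so induction on `l` reduces everything to
`E V(t) = ∑ₖ P{Sₖ ≤ t < S_{k+1}} ≤ 1`.
-/

open MeasureTheory ProbabilityTheory Filter Topology Set Asymptotics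

noncomputable section

/-- A function is slowly varying at infinity. -/
def SlowlyVarying (L : ℝ → ℝ) : Prop :=
  ∀ lam : ℝ, 0 < lam → Tendsto (fun t => L (lam * t) / L t) atTop (nhds 1)

/-- A function `b : [0,∞) → [0,∞)` is directly Riemann integrable: nonnegative,
Lebesgue-a.e. continuous, locally bounded, with summable sups over unit intervals. -/
def DirectlyRiemannIntegrable (b : ℝ → ℝ) : Prop :=
  (∀ t ≥ (0:ℝ), 0 ≤ b t) ∧
  (∀ᵐ t ∂(volume.restrict (Ici (0:ℝ))), ContinuousAt b t) ∧
  (∀ T > (0:ℝ), ∃ M : ℝ, ∀ t ∈ Icc (0:ℝ) T, b t ≤ M) ∧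
  Summable (fun n : ℕ => ⨆ y ∈ Ico (n : ℝ) ((n : ℝ) + 1), b y)

/-- A càdlàg (right-continuous with left limits) real function. -/
def Cadlag (f : ℝ → ℝ) : Prop :=
  (∀ t : ℝ, ContinuousWithinAt f (Ici t) t) ∧
  (∀ t : ℝ, ∃ L : ℝ, Tendsto f (nhdsWithin t (Iio t)) (nhds L))

/-- The zero-delayed random walk `S_k = ξ_0 + ⋯ + ξ_{k-1}`. -/
def rw {Ω : Type*} (ξ : ℕ → Ω → ℝ) (k : ℕ) (ω : Ω) : ℝ := ∑ i ∈ Finset.range k, ξ i ω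

/-- The centered random process with immigration
`Ỹ(t) = Σ_{k≥0} (X_{k+1}(t−S_k) − h(t−S_k)) 1{S_k ≤ t}`. -/
def Ytil {Ω : Type*} (X : ℕ → ℝ → Ω → ℝ) (ξ : ℕ → Ω → ℝ) (h : ℝ → ℝ) (t : ℝ) (ω : Ω) : ℝ :=
  ∑' k : ℕ, if rw ξ k ω ≤ t then X k (t - rw ξ k ω) ω - h (t - rw ξ k ω) else 0

open scoped ENNReal Nat

lemma ENNReal.add_pow_succ_le (a y : ℝ≥0∞) (m : ℕ) :
    (a + y) ^ (m + 1) ≤ y ^ (m + 1) + (m + 1) * a * (a + y) ^ m := by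
  induction m with
  | zero => simp [add_comm]
  | succ m ih =>
    have hy : y ^ (m + 1) ≤ (a + y) ^ (m + 1) := pow_le_pow_left₀ zero_le le_add_self _
    calc (a + y) ^ (m + 1 + 1) = (a + y) * (a + y) ^ (m + 1) := pow_succ' _ _
      _ ≤ (a + y) * (y ^ (m + 1) + (m + 1) * a * (a + y) ^ m) := by gcongr
      _ = y ^ (m + 1 + 1) + (a * y ^ (m + 1) + (m + 1) * a * (a + y) ^ (m + 1)) := by ring
      _ ≤ y ^ (m + 1 + 1) + (a * (a + y) ^ (m + 1) + (m + 1) * a * (a + y) ^ (m + 1)) := by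
        gcongr
      _ = y ^ (m + 1 + 1) + ((m + 1 : ℕ) + 1) * a * (a + y) ^ (m + 1) := by push_cast; ring

lemma ENNReal.sum_range_pow_succ_le (m : ℕ) : ∀ (N : ℕ) (a : ℕ → ℝ≥0∞),
    (∑ k ∈ Finset.range N, a k) ^ (m + 1) ≤
      (m + 1) * ∑ k ∈ Finset.range N, a k * (∑ j ∈ Finset.range (N - k), a (k + j)) ^ m
  | 0, a => by simp
  | N + 1, a => by
    have ih : (∑ k ∈ Finset.range N, a (k + 1)) ^ (m + 1) ≤ (m + 1) * ∑ k ∈ Finset.range N,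
        a (k + 1) * (∑ j ∈ Finset.range (N - k), a (k + 1 + j)) ^ m := by
      simpa only [Nat.add_right_comm _ _ 1] using sum_range_pow_succ_le m N (fun k => a (k + 1))
    calc (∑ k ∈ Finset.range (N + 1), a k) ^ (m + 1)
        = (a 0 + ∑ k ∈ Finset.range N, a (k + 1)) ^ (m + 1) := by
          rw [Finset.sum_range_succ', add_comm]
      _ ≤ (∑ k ∈ Finset.range N, a (k + 1)) ^ (m + 1)
            + (m + 1) * a 0 * (∑ k ∈ Finset.range (N + 1), a k) ^ m := by
          rw [Finset.sum_range_succ' a N, add_comm (∑ k ∈ Finset.range N, a (k + 1))]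
          exact add_pow_succ_le _ _ _
      _ ≤ (m + 1) * ∑ k ∈ Finset.range N,
              a (k + 1) * (∑ j ∈ Finset.range (N - k), a (k + 1 + j)) ^ m
            + (m + 1) * a 0 * (∑ k ∈ Finset.range (N + 1), a k) ^ m := by gcongr
      _ = (m + 1) * ∑ k ∈ Finset.range (N + 1),
              a k * (∑ j ∈ Finset.range (N + 1 - k), a (k + j)) ^ m := by
          rw [Finset.sum_range_succ'
            (fun k => a k * (∑ j ∈ Finset.range (N + 1 - k), a (k + j)) ^ m)]
          simp only [Nat.add_sub_add_right, Nat.sub_zero, zero_add]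
          ring

lemma ProbabilityTheory.IndepFun.lintegral_comp_eq {Ω α β : Type*} [MeasurableSpace Ω]
    [MeasurableSpace α] [MeasurableSpace β] {μ : Measure Ω} [IsFiniteMeasure μ]
    {X : Ω → α} {Y : Ω → β} (hXY : IndepFun X Y μ) (hX : Measurable X) (hY : Measurable Y)
    {Φ : α × β → ℝ≥0∞} (hΦ : Measurable Φ) :
    ∫⁻ ω, Φ (X ω, Y ω) ∂μ = ∫⁻ ω, ∫⁻ ω', Φ (X ω, Y ω') ∂μ ∂μ := by
  rw [← lintegral_map hΦ (hX.prodMk hY),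
    (indepFun_iff_map_prod_eq_prod_map_map hX.aemeasurable hY.aemeasurable).1 hXY,
    lintegral_prod _ hΦ.aemeasurable]
  have hinner : Measurable fun s => ∫⁻ ω', Φ (s, Y ω') ∂μ :=
    (hΦ.comp (measurable_fst.prodMk (hY.comp measurable_snd))).lintegral_prod_right'
  rw [← lintegral_map hinner hX]
  exact lintegral_congr fun s => lintegral_map (hΦ.comp measurable_prodMk_left) hY

lemma ENNReal.ofReal_tsum_le {ι : Type*} {f : ι → ℝ} (hf : ∀ i, 0 ≤ f i) :
    ENNReal.ofReal (∑' i, f i) ≤ ∑' i, ENNReal.ofReal (f i) := by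
  by_cases hs : Summable f
  · exact (ENNReal.ofReal_tsum_of_nonneg hf hs).le
  · simp [tsum_eq_zero_of_not_summable hs]

lemma pos_of_tendsto_div_nhds_one {g h : ℝ → ℝ} (hg : Antitone g) (hg₀ : ∀ t, 0 ≤ g t)
    (hlim : Tendsto (fun t => g t / h t) atTop (𝓝 1)) (u : ℝ) : 0 < g u := by
  obtain ⟨t, hne, hut⟩ := ((hlim.eventually_ne one_ne_zero).and (eventually_ge_atTop u)).exists
  exact ((hg₀ t).lt_of_ne' (div_ne_zero_iff.1 hne).1).trans_le (hg hut)

lemma exists_abs_le_mul_of_isBigO {f g : ℝ → ℝ}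
    (hf : ∀ T > (0 : ℝ), ∃ M : ℝ, ∀ t ∈ Icc (0 : ℝ) T, |f t| ≤ M) (hfg : f =O[atTop] g)
    (hg : Antitone g) (hg_pos : ∀ u, 0 < g u) :
    ∃ K, 0 ≤ K ∧ ∀ u, 0 ≤ u → |f u| ≤ K * g u := by
  obtain ⟨c, hc⟩ := hfg.bound
  obtain ⟨T₀, hT₀⟩ := eventually_atTop.1 hc
  set T := max T₀ 1
  obtain ⟨M, hM⟩ := hf T (lt_max_of_lt_right one_pos)
  have hMT : 0 ≤ |M| / g T := div_nonneg (abs_nonneg M) (hg_pos T).le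
  refine ⟨|c| + |M| / g T, add_nonneg (abs_nonneg c) hMT, fun u hu => ?_⟩
  rcases le_or_gt u T with huT | hTu
  · calc |f u| ≤ |M| := (hM u ⟨hu, huT⟩).trans (le_abs_self M)
      _ = |M| / g T * g T := (div_mul_cancel₀ _ (hg_pos T).ne').symm
      _ ≤ |M| / g T * g u := mul_le_mul_of_nonneg_left (hg huT) hMT
      _ ≤ (|c| + |M| / g T) * g u :=
        mul_le_mul_of_nonneg_right (le_add_of_nonneg_left (abs_nonneg c)) (hg_pos u).le
  · have hbound := hT₀ u ((le_max_left _ _).trans hTu.le)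
    rw [Real.norm_eq_abs, Real.norm_of_nonneg (hg_pos u).le] at hbound
    exact hbound.trans (mul_le_mul_of_nonneg_right
      ((le_abs_self c).trans (le_add_of_nonneg_right hMT)) (hg_pos u).le)

namespace RenewalShotNoise

def partialSum (x : ℕ → ℝ) (k : ℕ) : ℝ := ∑ i ∈ Finset.range k, x i

def shotTerm (G : ℝ → ℝ≥0∞) (t : ℝ) (x : ℕ → ℝ) (k : ℕ) : ℝ≥0∞ :=
  if partialSum x k ≤ t then G (t - partialSum x k) else 0

/-- `iteratedShotSum G l N t x = ∑_{k₁ ≤ ⋯ ≤ kₗ < N} ∏ⱼ shotTerm G t x kⱼ`, unfolded along `k₁`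
by restarting the walk at `partialSum x k₁`. -/
def iteratedShotSum (G : ℝ → ℝ≥0∞) : ℕ → ℕ → ℝ → (ℕ → ℝ) → ℝ≥0∞
  | 0, _, _, _ => 1
  | l + 1, N, t, x => ∑ k ∈ Finset.range N,
      shotTerm G t x k * iteratedShotSum G l (N - k) (t - partialSum x k) (fun i => x (k + i))

variable {G : ℝ → ℝ≥0∞}

lemma measurable_measure_Ioi (ν : Measure ℝ) : Measurable fun u : ℝ => ν (Ioi u) :=
  Antitone.measurable fun _ _ huv => measure_mono (Ioi_subset_Ioi huv)

lemma partialSum_add (x : ℕ → ℝ) (k j : ℕ) :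
    partialSum x (k + j) = partialSum x k + partialSum (fun i => x (k + i)) j :=
  Finset.sum_range_add x k j

lemma partialSum_mono {x : ℕ → ℝ} (hx : ∀ i, 0 ≤ x i) : Monotone (partialSum x) :=
  fun _ _ hkj => Finset.sum_le_sum_of_subset_of_nonneg (Finset.range_subset_range.2 hkj)
    fun i _ _ => hx i

lemma shotTerm_shift (t : ℝ) (x : ℕ → ℝ) (k j : ℕ) :
    shotTerm G (t - partialSum x k) (fun i => x (k + i)) j = shotTerm G t x (k + j) := by
  simp only [shotTerm, partialSum_add, sub_sub, le_sub_iff_add_le']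

lemma sum_shotTerm_pow_le : ∀ (l N : ℕ) (t : ℝ) (x : ℕ → ℝ),
    (∑ k ∈ Finset.range N, shotTerm G t x k) ^ l ≤ l ! * iteratedShotSum G l N t x
  | 0, N, t, x => by simp [iteratedShotSum]
  | l + 1, N, t, x => calc
      (∑ k ∈ Finset.range N, shotTerm G t x k) ^ (l + 1)
        ≤ (l + 1) * ∑ k ∈ Finset.range N,
            shotTerm G t x k * (∑ j ∈ Finset.range (N - k), shotTerm G t x (k + j)) ^ l :=
          ENNReal.sum_range_pow_succ_le l N _
      _ ≤ (l + 1) * ∑ k ∈ Finset.range N, shotTerm G t x k *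
            (l ! * iteratedShotSum G l (N - k) (t - partialSum x k) (fun i => x (k + i))) := by
          gcongr with k
          simp only [← shotTerm_shift]
          exact sum_shotTerm_pow_le l _ _ _
      _ = (l + 1)! * iteratedShotSum G (l + 1) N t x := by
          simp only [iteratedShotSum, Nat.factorial_succ, Finset.mul_sum]
          push_cast
          exact Finset.sum_congr rfl fun _ _ => by ring

lemma measurable_partialSum (k : ℕ) : Measurable fun x : ℕ → ℝ => partialSum x k :=
  Finset.measurable_sum _ fun i _ => measurable_pi_apply i

lemma measurable_shotTerm (hG : Measurable G) (k : ℕ) :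
    Measurable fun p : ℝ × (ℕ → ℝ) => shotTerm G p.1 p.2 k :=
  have hS := (measurable_partialSum k).comp measurable_snd
  Measurable.ite (measurableSet_le hS measurable_fst) (hG.comp (measurable_fst.sub hS))
    measurable_const

lemma measurable_iteratedShotSum (hG : Measurable G) :
    ∀ l N, Measurable fun p : ℝ × (ℕ → ℝ) => iteratedShotSum G l N p.1 p.2
  | 0, _ => measurable_const
  | l + 1, N => Finset.measurable_sum _ fun k _ =>
      (measurable_shotTerm hG k).mul <| (measurable_iteratedShotSum hG l (N - k)).comp <|
        (measurable_fst.sub ((measurable_partialSum k).comp measurable_snd)).prodMk <|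
          measurable_pi_lambda _ fun i => (measurable_pi_apply (k + i)).comp measurable_snd

variable {Ω : Type*} [MeasurableSpace Ω] {μ : Measure Ω} {ν : Measure ℝ} {ξ : ℕ → Ω → ℝ}

/-- The steps are tied to a fixed law `ν` rather than to the law of `ξ 0`, so that the class is
closed under `shift`, along which the moment bounds are proved by induction. -/
structure IIDNonnegSteps (μ : Measure Ω) (ν : Measure ℝ) (ξ : ℕ → Ω → ℝ) : Prop where
  measurable : ∀ i, Measurable (ξ i)
  indep : iIndepFun ξ μ
  map_eq : ∀ i, μ.map (ξ i) = ν
  nonneg : ∀ i, ∀ᵐ ω ∂μ, 0 ≤ ξ i ω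

namespace IIDNonnegSteps

lemma shift (h : IIDNonnegSteps μ ν ξ) (k : ℕ) : IIDNonnegSteps μ ν fun i => ξ (k + i) :=
  ⟨fun i => h.measurable (k + i), h.indep.precomp (add_right_injective k),
    fun i => h.map_eq (k + i), fun i => h.nonneg (k + i)⟩

lemma indepFun_partialSum_shift (h : IIDNonnegSteps μ ν ξ) (k : ℕ) :
    IndepFun (fun ω => partialSum (fun i => ξ i ω) k) (fun ω i => ξ (k + i) ω) μ := by
  have hsplit := indep_iSup_of_disjoint (fun i => (h.measurable i).comap_le) h.indep.iIndep
    (S := Iio k) (T := Ici k)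
    (Set.disjoint_left.2 fun _ hi hi' => not_le.2 (mem_Iio.1 hi) (mem_Ici.1 hi'))
  have hprefix : Measurable[⨆ j ∈ Iio k, MeasurableSpace.comap (ξ j) inferInstance]
      fun ω => partialSum (fun i => ξ i ω) k :=
    Finset.measurable_sum _ fun i hi => (comap_measurable (ξ i)).mono
      (le_iSup₂ (f := fun j (_ : j ∈ Iio k) => MeasurableSpace.comap (ξ j) inferInstance) i
        (Finset.mem_range.1 hi)) le_rfl
  have htail : Measurable[⨆ j ∈ Ici k, MeasurableSpace.comap (ξ j) inferInstance]
      fun ω i => ξ (k + i) ω :=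
    @measurable_pi_lambda _ _ _ (_) _ _ fun i => (comap_measurable (ξ (k + i))).mono
      (le_iSup₂ (f := fun j (_ : j ∈ Ici k) => MeasurableSpace.comap (ξ j) inferInstance) (k + i)
        (Nat.le_add_right k i)) le_rfl
  rw [IndepFun_iff_Indep]
  exact indep_of_indep_of_le_left (indep_of_indep_of_le_right hsplit htail.comap_le)
    hprefix.comap_le

lemma measurable_walk (h : IIDNonnegSteps μ ν ξ) (k : ℕ) :
    Measurable fun ω => partialSum (fun i => ξ i ω) k :=
  (measurable_partialSum k).comp (measurable_pi_lambda _ h.measurable)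

lemma measurable_shift (h : IIDNonnegSteps μ ν ξ) (k : ℕ) : Measurable fun ω i => ξ (k + i) ω :=
  measurable_pi_lambda _ (h.shift k).measurable

variable [IsProbabilityMeasure μ]

lemma lintegral_shotTerm_eq (h : IIDNonnegSteps μ ν ξ) (t : ℝ) (k : ℕ) :
    ∫⁻ ω, shotTerm (fun u => ν (Ioi u)) t (fun i => ξ i ω) k ∂μ =
      μ {ω | partialSum (fun i => ξ i ω) k ≤ t ∧ t < partialSum (fun i => ξ i ω) (k + 1)} := by
  set X : Ω → ℝ := fun ω => partialSum (fun i => ξ i ω) k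
  have hX : Measurable X := h.measurable_walk k
  have hXY : IndepFun X (ξ k) μ := by
    simpa [Function.comp_def] using
      (h.indepFun_partialSum_shift k).comp measurable_id (measurable_pi_apply 0)
  set D : Set (ℝ × ℝ) := {p | p.1 ≤ t ∧ t < p.1 + p.2}
  have hD : MeasurableSet D := (measurableSet_le measurable_fst measurable_const).inter
    (measurableSet_lt measurable_const (measurable_fst.add measurable_snd))
  have hslice (s : ℝ) :
      (if s ≤ t then ν (Ioi (t - s)) else 0) = ∫⁻ ω, D.indicator 1 (s, ξ k ω) ∂μ := by
    rw [← lintegral_map (f := fun z => D.indicator 1 (s, z))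
      ((measurable_one.indicator hD).comp measurable_prodMk_left) (h.measurable k), h.map_eq k]
    change _ = ∫⁻ z, (Prod.mk s ⁻¹' D).indicator 1 z ∂ν
    rw [lintegral_indicator_one (measurable_prodMk_left hD)]
    by_cases hs : s ≤ t
    · rw [if_pos hs]
      congr 1
      ext z
      simp [D, hs, sub_lt_iff_lt_add']
    · simp [D, hs]
  calc ∫⁻ ω, shotTerm (fun u => ν (Ioi u)) t (fun i => ξ i ω) k ∂μ
      = ∫⁻ ω, ∫⁻ ω', D.indicator 1 (X ω, ξ k ω') ∂μ ∂μ := lintegral_congr fun ω => hslice (X ω)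
    _ = ∫⁻ ω, D.indicator 1 (X ω, ξ k ω) ∂μ :=
      (hXY.lintegral_comp_eq hX (h.measurable k) (measurable_one.indicator hD)).symm
    _ = μ ((fun ω => (X ω, ξ k ω)) ⁻¹' D) :=
      lintegral_indicator_one (hD.preimage (hX.prodMk (h.measurable k)))
    _ = _ := by simp [X, D, partialSum, Finset.sum_range_succ]

lemma sum_lintegral_shotTerm_le_one (h : IIDNonnegSteps μ ν ξ) (N : ℕ) (t : ℝ) :
    ∑ k ∈ Finset.range N, ∫⁻ ω, shotTerm (fun u => ν (Ioi u)) t (fun i => ξ i ω) k ∂μ ≤ 1 := by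
  set S : ℕ → Ω → ℝ := fun k ω => partialSum (fun i => ξ i ω) k
  set E : ℕ → Set Ω := fun k => {ω | S k ω ≤ t ∧ t < S (k + 1) ω}
  have hS (k : ℕ) : Measurable (S k) := h.measurable_walk k
  have hE (k : ℕ) : MeasurableSet (E k) :=
    (measurableSet_le (hS k) measurable_const).inter (measurableSet_lt measurable_const (hS _))
  have hdisj : Pairwise (Function.onFun (AEDisjoint μ) E) := by
    refine (Std.Symm.pairwise_on E).2 fun j k hjk => measure_eq_zero_iff_ae_notMem.2 ?_
    filter_upwards [ae_all_iff.2 h.nonneg] with ω hω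
    rintro ⟨⟨-, hj⟩, hk, -⟩
    exact (hj.trans_le ((partialSum_mono hω) hjk)).not_ge hk
  simp only [h.lintegral_shotTerm_eq]
  rw [← measure_biUnion_finset₀ (hdisj.set_pairwise _) fun k _ => (hE k).nullMeasurableSet]
  exact prob_le_one

lemma lintegral_shotTerm_mul_le (h : IIDNonnegSteps μ ν ξ) (hG : Measurable G)
    (t : ℝ) (k : ℕ) {Ψ : ℝ → (ℕ → ℝ) → ℝ≥0∞} (hΨ : Measurable (Function.uncurry Ψ))
    (hΨ_le : ∀ s, ∫⁻ ω, Ψ s (fun i => ξ (k + i) ω) ∂μ ≤ 1) :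
    ∫⁻ ω, shotTerm G t (fun i => ξ i ω) k *
        Ψ (partialSum (fun i => ξ i ω) k) (fun i => ξ (k + i) ω) ∂μ
      ≤ ∫⁻ ω, shotTerm G t (fun i => ξ i ω) k ∂μ := by
  set Φ : ℝ × (ℕ → ℝ) → ℝ≥0∞ := fun p => (if p.1 ≤ t then G (t - p.1) else 0) * Ψ p.1 p.2
  have hΦ : Measurable Φ :=
    (Measurable.ite (measurableSet_le measurable_fst measurable_const)
      (hG.comp (measurable_const.sub measurable_fst)) measurable_const).mul hΨ
  refine ((h.indepFun_partialSum_shift k).lintegral_comp_eq (h.measurable_walk k)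
    (h.measurable_shift k) hΦ).trans_le (lintegral_mono fun ω => ?_)
  simp only [Φ]
  rw [lintegral_const_mul (f := fun ω' => Ψ _ (fun i => ξ (k + i) ω'))
    _ (hΨ.comp (measurable_const.prodMk (h.measurable_shift k)))]
  exact mul_le_of_le_one_right' (hΨ_le _)

lemma lintegral_iteratedShotSum_le_one (h : IIDNonnegSteps μ ν ξ) (l N : ℕ) (t : ℝ) :
    ∫⁻ ω, iteratedShotSum (fun u => ν (Ioi u)) l N t (fun i => ξ i ω) ∂μ ≤ 1 := by
  have hG := measurable_measure_Ioi ν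
  induction l generalizing ξ N t with
  | zero => simp [iteratedShotSum]
  | succ l ih =>
    have hΨ (k : ℕ) : Measurable (Function.uncurry fun s y =>
        iteratedShotSum (fun u => ν (Ioi u)) l (N - k) (t - s) y) :=
      (measurable_iteratedShotSum hG l (N - k)).comp
        ((measurable_const.sub measurable_fst).prodMk measurable_snd)
    calc ∫⁻ ω, iteratedShotSum (fun u => ν (Ioi u)) (l + 1) N t (fun i => ξ i ω) ∂μ
        = ∑ k ∈ Finset.range N, ∫⁻ ω, shotTerm (fun u => ν (Ioi u)) t (fun i => ξ i ω) k *
            iteratedShotSum (fun u => ν (Ioi u)) l (N - k) (t - partialSum (fun i => ξ i ω) k)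
              (fun i => ξ (k + i) ω) ∂μ :=
          lintegral_finsetSum _ fun k _ => ((measurable_shotTerm hG k).comp
            (measurable_const.prodMk (measurable_pi_lambda _ h.measurable))).mul
              ((hΨ k).comp ((h.measurable_walk k).prodMk (h.measurable_shift k)))
      _ ≤ ∑ k ∈ Finset.range N, ∫⁻ ω, shotTerm (fun u => ν (Ioi u)) t (fun i => ξ i ω) k ∂μ :=
          Finset.sum_le_sum fun k _ => h.lintegral_shotTerm_mul_le hG t k (hΨ k)
            fun s => ih (h.shift k) _ _
      _ ≤ 1 := h.sum_lintegral_shotTerm_le_one N t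

lemma lintegral_tsum_shotTerm_pow_le (h : IIDNonnegSteps μ ν ξ) (l : ℕ) (t : ℝ) :
    ∫⁻ ω, (∑' k, shotTerm (fun u => ν (Ioi u)) t (fun i => ξ i ω) k) ^ l ∂μ ≤ l ! := by
  have hG := measurable_measure_Ioi ν
  have hx : Measurable fun ω i => ξ i ω := measurable_pi_lambda _ h.measurable
  have hmeas (N : ℕ) : Measurable fun ω =>
      (∑ k ∈ Finset.range N, shotTerm (fun u => ν (Ioi u)) t (fun i => ξ i ω) k) ^ l :=
    (Finset.measurable_sum _ fun k _ =>
      (measurable_shotTerm hG k).comp (measurable_const.prodMk hx)).pow_const l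
  have hmono : Monotone fun N ω =>
      (∑ k ∈ Finset.range N, shotTerm (fun u => ν (Ioi u)) t (fun i => ξ i ω) k) ^ l :=
    fun N N' hNN' ω =>
      pow_le_pow_left₀ zero_le (Finset.sum_le_sum_of_subset (Finset.range_subset_range.2 hNN')) l
  simp_rw [ENNReal.tsum_eq_iSup_nat, ENNReal.iSup_pow]
  rw [lintegral_iSup hmeas hmono]
  refine iSup_le fun N => ?_
  calc ∫⁻ ω, (∑ k ∈ Finset.range N, shotTerm (fun u => ν (Ioi u)) t (fun i => ξ i ω) k) ^ l ∂μ
      ≤ ∫⁻ ω, l ! * iteratedShotSum (fun u => ν (Ioi u)) l N t (fun i => ξ i ω) ∂μ :=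
        lintegral_mono fun ω => sum_shotTerm_pow_le l N t _
    _ = l ! * ∫⁻ ω, iteratedShotSum (fun u => ν (Ioi u)) l N t (fun i => ξ i ω) ∂μ :=
        lintegral_const_mul _ ((measurable_iteratedShotSum hG l N).comp
          (measurable_const.prodMk hx))
    _ ≤ l ! := mul_le_of_le_one_right' (h.lintegral_iteratedShotSum_le_one l N t)

lemma norm_integral_tsum_pow_le (h : IIDNonnegSteps μ ν ξ) {f : ℝ → ℝ} {K : ℝ} (hK : 0 ≤ K)
    (hf : ∀ u, 0 ≤ u → |f u| ≤ K * (ν (Ioi u)).toReal) (l : ℕ) (t : ℝ) :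
    ‖∫ ω, (∑' k : ℕ, if rw ξ k ω ≤ t then |f (t - rw ξ k ω)| else 0) ^ l ∂μ‖ ≤ K ^ l * l ! := by
  have hnonneg (ω : Ω) (k : ℕ) : 0 ≤ if rw ξ k ω ≤ t then |f (t - rw ξ k ω)| else 0 := by
    split_ifs <;> simp
  have hterm (ω : Ω) (k : ℕ) :
      ENNReal.ofReal (if rw ξ k ω ≤ t then |f (t - rw ξ k ω)| else 0)
        ≤ ENNReal.ofReal K * shotTerm (fun u => ν (Ioi u)) t (fun i => ξ i ω) k := by
    change _ ≤ _ * (if rw ξ k ω ≤ t then ν (Ioi (t - rw ξ k ω)) else 0)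
    split_ifs with hk
    · calc ENNReal.ofReal |f (t - rw ξ k ω)|
          ≤ ENNReal.ofReal (K * (ν (Ioi (t - rw ξ k ω))).toReal) :=
            ENNReal.ofReal_le_ofReal (hf _ (sub_nonneg.2 hk))
        _ ≤ ENNReal.ofReal K * ν (Ioi (t - rw ξ k ω)) := by
            rw [ENNReal.ofReal_mul hK]
            gcongr
            exact ENNReal.ofReal_toReal_le
    · simp
  have hpointwise (ω : Ω) :
      ENNReal.ofReal ‖(∑' k : ℕ, if rw ξ k ω ≤ t then |f (t - rw ξ k ω)| else 0) ^ l‖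
        ≤ ENNReal.ofReal K ^ l *
          (∑' k, shotTerm (fun u => ν (Ioi u)) t (fun i => ξ i ω) k) ^ l := by
    have hsum : 0 ≤ ∑' k : ℕ, if rw ξ k ω ≤ t then |f (t - rw ξ k ω)| else 0 :=
      tsum_nonneg (hnonneg ω)
    rw [Real.norm_of_nonneg (pow_nonneg hsum l), ENNReal.ofReal_pow hsum, ← mul_pow,
      ← ENNReal.tsum_mul_left]
    gcongr
    exact (ENNReal.ofReal_tsum_le (hnonneg ω)).trans (ENNReal.tsum_le_tsum (hterm ω))
  refine (norm_integral_le_lintegral_norm _).trans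
    (ENNReal.toReal_le_of_le_ofReal (by positivity) ?_)
  calc ∫⁻ ω, ENNReal.ofReal ‖(∑' k : ℕ, if rw ξ k ω ≤ t then |f (t - rw ξ k ω)| else 0) ^ l‖ ∂μ
      ≤ ∫⁻ ω, ENNReal.ofReal K ^ l *
          (∑' k, shotTerm (fun u => ν (Ioi u)) t (fun i => ξ i ω) k) ^ l ∂μ :=
        lintegral_mono hpointwise
    _ = ENNReal.ofReal K ^ l *
          ∫⁻ ω, (∑' k, shotTerm (fun u => ν (Ioi u)) t (fun i => ξ i ω) k) ^ l ∂μ :=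
        lintegral_const_mul' _ _ (ENNReal.pow_ne_top ENNReal.ofReal_ne_top)
    _ ≤ ENNReal.ofReal K ^ l * l ! := by gcongr; exact h.lintegral_tsum_shotTerm_pow_le l t
    _ = ENNReal.ofReal (K ^ l * l !) := by
        rw [ENNReal.ofReal_mul (by positivity), ENNReal.ofReal_pow hK, ENNReal.ofReal_natCast]

end IIDNonnegSteps

end RenewalShotNoise

open RenewalShotNoise in
theorem statement11_general
    {Ω : Type*} [MeasureSpace Ω] [IsProbabilityMeasure (ℙ : Measure Ω)]
    (ξ : ℕ → Ω → ℝ) (hmξ : ∀ k, Measurable (ξ k))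
    (hξpos : ∀ k, ∀ᵐ ω ∂ℙ, 0 < ξ k ω)
    (hindep : iIndepFun ξ ℙ)
    (hident : ∀ k : ℕ, IdentDistrib (ξ k) (ξ 0) ℙ ℙ)
    (α : ℝ) (ℓξ : ℝ → ℝ)
    (hA1 : Tendsto (fun t => (ℙ {ω | t < ξ 0 ω}).toReal / (t ^ (-α) * ℓξ t)) atTop (nhds 1))
    (f : ℝ → ℝ)
    (hfloc : ∀ T > (0:ℝ), ∃ M : ℝ, ∀ t ∈ Icc (0:ℝ) T, |f t| ≤ M)
    (hfO : (fun t => f t) =O[atTop] (fun t => (ℙ {ω | t < ξ 0 ω}).toReal)) :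
    ∀ l : ℕ, 1 ≤ l →
      (fun t => ∫ ω,
          (∑' k : ℕ, if rw ξ k ω ≤ t then |f (t - rw ξ k ω)| else 0) ^ l ∂ℙ)
        =O[atTop] (fun _ => (1 : ℝ)) := by
  intro l _
  have htail (u : ℝ) : ℙ {ω | u < ξ 0 ω} = (Measure.map (ξ 0) ℙ) (Ioi u) :=
    (Measure.map_apply (hmξ 0) measurableSet_Ioi).symm
  have htail_anti : Antitone fun u => (ℙ {ω | u < ξ 0 ω}).toReal := fun u v huv =>
    ENNReal.toReal_mono (measure_ne_top _ _) (measure_mono fun _ hω => huv.trans_lt hω)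
  obtain ⟨K, hK, hfK⟩ := exists_abs_le_mul_of_isBigO hfloc hfO htail_anti
    (pos_of_tendsto_div_nhds_one htail_anti (fun _ => ENNReal.toReal_nonneg) hA1)
  have hsteps : IIDNonnegSteps ℙ (Measure.map (ξ 0) ℙ) ξ :=
    ⟨hmξ, hindep, fun k => (hident k).map_eq, fun k => (hξpos k).mono fun _ hω => hω.le⟩
  refine isBigO_of_le' (c := K ^ l * l !) _ fun t => ?_
  simpa using hsteps.norm_integral_tsum_pow_le hK (fun u hu => by simpa [htail] using hfK u hu) l t

theorem statement11
    {Ω : Type*} [MeasureSpace Ω] [IsProbabilityMeasure (ℙ : Measure Ω)]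
    (ξ : ℕ → Ω → ℝ) (hmξ : ∀ k, Measurable (ξ k))
    (hξpos : ∀ k, ∀ᵐ ω ∂ℙ, 0 < ξ k ω)
    (hindep : iIndepFun ξ ℙ)
    (hident : ∀ k : ℕ, IdentDistrib (ξ k) (ξ 0) ℙ ℙ)
    (α : ℝ) (hα : 0 < α ∧ α < 1) (ℓξ : ℝ → ℝ) (hℓξ : SlowlyVarying ℓξ)
    (hA1 : Tendsto (fun t => (ℙ {ω | t < ξ 0 ω}).toReal / (t ^ (-α) * ℓξ t)) atTop (nhds 1))
    (f : ℝ → ℝ) (hmf : Measurable f)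
    (hfloc : ∀ T > (0:ℝ), ∃ M : ℝ, ∀ t ∈ Icc (0:ℝ) T, |f t| ≤ M)
    (hfO : (fun t => f t) =O[atTop] (fun t => (ℙ {ω | t < ξ 0 ω}).toReal)) :
    ∀ l : ℕ, 1 ≤ l →
      (fun t => ∫ ω,
          (∑' k : ℕ, if rw ξ k ω ≤ t then |f (t - rw ξ k ω)| else 0) ^ l ∂ℙ)
        =O[atTop] (fun _ => (1 : ℝ)) :=
  statement11_general ξ hmξ hξpos hindep hident α ℓξ hA1 f hfloc hfO
end
end

section
/- Assume P{ξ>t} ~ t^{−α} ℓ_ξ(t) as t→∞ for some α∈(0,1) and slowly varying ℓ_ξ. Suppose that for every l∈ℕ, E[|X(t)|^l] = O(P{ξ>t}) as t→∞ and t ↦ E[|X(t)|^l] is locally bounded. Then for every l∈ℕ, E[|Y(t)|^l] = O(1) as t→∞, where Y(t) = Σ_{k≥0} X_{k+1}(t−S_k) 1{S_k ≤ t} is the random process with immigration. -/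
open MeasureTheory ProbabilityTheory Filter Topology Set Asymptotics

noncomputable section

open scoped ENNReal

/-!
Write `S_k = ξ_0 + ⋯ + ξ_{k-1}` and `Z(t) = ∑_k 1{S_k ≤ t} |X_k(t - S_k)|`, so `|Y(t)| ≤ Z(t)`;
we bound `E[Z(t)^m]` uniformly in `t` by induction on `m`. Expanding
`(∑ a_k)^(m+1) ≤ (m+1) 2^m ∑_k ((∑_{j<k} a_j)^m a_k + a_k^(m+1))` leaves expectations in which the
`k`-th summand multiplies a function of the first `k` pairs `(X_j, ξ_j)`. Since `(X_k, ξ_k)` is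
independent of these, integrating it out first turns `|X_k(t - S_k)|^e` into `E|X(v)|^e` at
`v = t - S_k`, which is at most `C_e P{ξ > v}` (big-O at infinity, local boundedness near `0`);
and `P{ξ_k > t - S_k}` given the past is the conditional probability that `t ∈ [S_k, S_{k+1})`.
These events are disjoint in `k`, so the whole sum is at most `C_1 E[Z(t)^m] + C_{m+1}`.

`X` is only measurable at fixed times, so `t - S_k` is first replaced by its dyadic upper
approximations; the bound passes to the limit by right-continuity and Fatou's lemma.
-/

namespace ENNReal

theorem add_pow_succ_le_add_mul (m : ℕ) (x a : ℝ≥0∞) :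
    (x + a) ^ (m + 1) ≤ x ^ (m + 1) + (m + 1) * a * (x + a) ^ m := by
  induction m with
  | zero => simp
  | succ m ih =>
    have hx : x ^ (m + 1) ≤ (x + a) ^ (m + 1) := by gcongr; exact le_self_add
    calc (x + a) ^ (m + 1 + 1) = (x + a) ^ (m + 1) * (x + a) := pow_succ _ _
      _ ≤ (x ^ (m + 1) + (m + 1) * a * (x + a) ^ m) * (x + a) := by gcongr
      _ = x ^ (m + 1 + 1) + (x ^ (m + 1) * a + (m + 1) * a * (x + a) ^ (m + 1)) := by ring
      _ ≤ x ^ (m + 1 + 1) + ((x + a) ^ (m + 1) * a + (m + 1) * a * (x + a) ^ (m + 1)) := by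
        gcongr
      _ = x ^ (m + 1 + 1) + ((m + 1 : ℕ) + 1) * a * (x + a) ^ (m + 1) := by push_cast; ring

theorem add_pow_le_two_pow_mul (m : ℕ) (x a : ℝ≥0∞) : (x + a) ^ m ≤ 2 ^ m * (x ^ m + a ^ m) :=
  calc (x + a) ^ m ≤ (2 * max x a) ^ m := by
        gcongr; rw [two_mul]; exact add_le_add (le_max_left x a) (le_max_right x a)
    _ = 2 ^ m * max x a ^ m := mul_pow 2 _ m
    _ ≤ 2 ^ m * (x ^ m + a ^ m) := by
        gcongr
        rcases le_total x a with h | h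
        · rw [max_eq_right h]; exact le_add_self
        · rw [max_eq_left h]; exact le_self_add

theorem add_pow_succ_le_s14 (m : ℕ) (x a : ℝ≥0∞) :
    (x + a) ^ (m + 1) ≤ x ^ (m + 1) + (m + 1) * 2 ^ m * (x ^ m * a + a ^ (m + 1)) :=
  calc (x + a) ^ (m + 1) ≤ x ^ (m + 1) + (m + 1) * a * (x + a) ^ m := add_pow_succ_le_add_mul m x a
    _ ≤ x ^ (m + 1) + (m + 1) * a * (2 ^ m * (x ^ m + a ^ m)) := by
      gcongr; exact add_pow_le_two_pow_mul m x a
    _ = x ^ (m + 1) + (m + 1) * 2 ^ m * (x ^ m * a + a ^ (m + 1)) := by ring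

theorem tsum_pow_succ_le (m : ℕ) (a : ℕ → ℝ≥0∞) :
    (∑' k, a k) ^ (m + 1) ≤
      (m + 1) * 2 ^ m * ∑' k, ((∑ j ∈ Finset.range k, a j) ^ m * a k + a k ^ (m + 1)) := by
  set c : ℝ≥0∞ := (m + 1) * 2 ^ m
  have hfin : ∀ N, (∑ k ∈ Finset.range N, a k) ^ (m + 1) ≤
      c * ∑ k ∈ Finset.range N, ((∑ j ∈ Finset.range k, a j) ^ m * a k + a k ^ (m + 1)) := by
    intro N
    induction N with
    | zero => simp
    | succ N ih =>
      rw [Finset.sum_range_succ, Finset.sum_range_succ, mul_add]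
      exact (add_pow_succ_le_s14 m _ _).trans (add_le_add_left ih _)
  refine le_of_tendsto' (ENNReal.Tendsto.pow (ENNReal.tendsto_nat_tsum a)) fun N =>
    (hfin N).trans ?_
  gcongr
  exact ENNReal.sum_le_tsum _

theorem tsum_liminf_le_liminf_tsum {ι κ : Type*} {u : Filter ι} [u.IsCountablyGenerated]
    (f : ι → κ → ℝ≥0∞) : ∑' k, u.liminf (fun i => f i k) ≤ u.liminf (fun i => ∑' k, f i k) := by
  let _ : MeasurableSpace κ := ⊤
  have : MeasurableSingletonClass κ := ⟨fun _ => trivial⟩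
  simpa [lintegral_count] using
    lintegral_liminf_le (μ := Measure.count) (f := f) (u := u) fun _ => measurable_from_top

end ENNReal

theorem Monotone.tsum_ite_mem_Ico_le_one {α : Type*} [LinearOrder α] {S : ℕ → α} (hS : Monotone S)
    (t : α) : ∑' k, (if S k ≤ t ∧ t < S (k + 1) then (1 : ℝ≥0∞) else 0) ≤ 1 := by
  have hsub : {k | S k ≤ t ∧ t < S (k + 1)}.Subsingleton := by
    intro k hk k' hk'
    by_contra hne
    rcases Nat.lt_or_gt_of_ne hne with h | h
    · exact lt_irrefl t (hk.2.trans_le ((hS h).trans hk'.1))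
    · exact lt_irrefl t (hk'.2.trans_le ((hS h).trans hk.1))
  calc ∑' k, (if S k ≤ t ∧ t < S (k + 1) then (1 : ℝ≥0∞) else 0)
      = ∑' k, {k | S k ≤ t ∧ t < S (k + 1)}.indicator 1 k := by
        simp only [Set.indicator_apply, Set.mem_ofPred_eq, Pi.one_apply]
    _ = ∑' _ : {k | S k ≤ t ∧ t < S (k + 1)}, (1 : ℝ≥0∞) := (tsum_subtype _ _).symm
    _ ≤ 1 := by
        rw [ENNReal.tsum_set_one]
        exact_mod_cast Set.encard_le_one_iff.2 fun a b ha hb => hsub ha hb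

def dyadicCeil (n : ℕ) (u : ℝ) : ℝ := ⌈u * 2 ^ n⌉₊ / 2 ^ n

theorem le_dyadicCeil (n : ℕ) (u : ℝ) : u ≤ dyadicCeil n u := by
  rw [dyadicCeil, le_div_iff₀ (by positivity)]
  exact Nat.le_ceil _

theorem dyadicCeil_le {u : ℝ} (hu : 0 ≤ u) (n : ℕ) : dyadicCeil n u ≤ u + (2 ^ n)⁻¹ := by
  rw [dyadicCeil, div_le_iff₀ (by positivity), add_mul, inv_mul_cancel₀ (by positivity)]
  exact (Nat.ceil_lt_add_one (mul_nonneg hu (by positivity))).le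

theorem tendsto_dyadicCeil {u : ℝ} (hu : 0 ≤ u) :
    Tendsto (fun n => dyadicCeil n u) atTop (𝓝[≥] u) := by
  have hlim : Tendsto (fun n : ℕ => u + ((2 : ℝ) ^ n)⁻¹) atTop (𝓝 u) := by
    simpa using (tendsto_const_nhds (x := u)).add
      (tendsto_inv_atTop_zero.comp (tendsto_pow_atTop_atTop_of_one_lt (one_lt_two (α := ℝ))))
  refine tendsto_nhdsWithin_iff.2 ⟨?_, .of_forall fun n => le_dyadicCeil n u⟩
  exact tendsto_of_tendsto_of_tendsto_of_le_of_le tendsto_const_nhds hlim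
    (le_dyadicCeil · u) (dyadicCeil_le hu)

theorem Measurable.comp_dyadicCeil {Ω β : Type*} {_ : MeasurableSpace Ω} [MeasurableSpace β]
    {f : ℝ → Ω → β} (hf : ∀ q, Measurable (f q)) {s : Ω → ℝ} (hs : Measurable s) (n : ℕ) :
    Measurable fun ω => f (dyadicCeil n (s ω)) ω := by
  have h : Measurable fun p : ℕ × Ω => f (p.1 / 2 ^ n) p.2 :=
    measurable_from_prod_countable_right fun z => hf ((z : ℝ) / 2 ^ n)
  exact h.comp ((hs.mul_const _).nat_ceil.prodMk measurable_id)

theorem ProbabilityTheory.lintegral_mul_comp_le_of_indep {Ω ι : Type*} [Countable ι]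
    [MeasurableSpace ι] [MeasurableSingletonClass ι] {m₁ m₂ mΩ : MeasurableSpace Ω}
    {μ : Measure Ω} (h₁ : m₁ ≤ mΩ) (h₂ : m₂ ≤ mΩ) (hind : Indep m₁ m₂ μ)
    {Φ : Ω → ℝ≥0∞} (hΦ : Measurable[m₁] Φ) {c : Ω → ι} (hc : Measurable[m₁] c)
    {Ψ Θ : ι → Ω → ℝ≥0∞} (hΨ : ∀ i, Measurable[m₂] (Ψ i)) (hΘ : ∀ i, Measurable[m₂] (Θ i))
    {C : ℝ≥0∞} (hΨΘ : ∀ i, ∫⁻ ω, Ψ i ω ∂μ ≤ C * ∫⁻ ω, Θ i ω ∂μ) :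
    ∫⁻ ω, Φ ω * Ψ (c ω) ω ∂μ ≤ C * ∫⁻ ω, Φ ω * Θ (c ω) ω ∂μ := by
  have hΦi : ∀ i, Measurable[m₁] ({ω | c ω = i}.indicator Φ) :=
    fun i => hΦ.indicator (hc (measurableSet_singleton i))
  -- Split according to the value of `c`; on each piece the two factors are independent.
  have hsplit : ∀ F : ι → Ω → ℝ≥0∞, (∀ i, Measurable[m₂] (F i)) →
      ∫⁻ ω, Φ ω * F (c ω) ω ∂μ
        = ∑' i, (∫⁻ ω, {ω | c ω = i}.indicator Φ ω ∂μ) * ∫⁻ ω, F i ω ∂μ := by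
    intro F hF
    have hpt : ∀ ω, Φ ω * F (c ω) ω = ∑' i, {ω | c ω = i}.indicator Φ ω * F i ω := by
      intro ω
      rw [tsum_eq_single (c ω) fun i hi => by simp [Set.indicator_of_notMem, Ne.symm hi]]
      simp
    simp_rw [hpt]
    rw [lintegral_tsum (f := fun i ω => {ω | c ω = i}.indicator Φ ω * F i ω)
      fun i => (((hΦi i).mono h₁ le_rfl).mul ((hF i).mono h₂ le_rfl)).aemeasurable]
    exact tsum_congr fun i =>
      lintegral_mul_eq_lintegral_mul_lintegral_of_independent_measurableSpace h₁ h₂ hind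
        (hΦi i) (hF i)
  rw [hsplit Ψ hΨ, hsplit Θ hΘ, ← ENNReal.tsum_mul_left]
  refine ENNReal.tsum_le_tsum fun i => ?_
  calc (∫⁻ ω, {ω | c ω = i}.indicator Φ ω ∂μ) * ∫⁻ ω, Ψ i ω ∂μ
      ≤ (∫⁻ ω, {ω | c ω = i}.indicator Φ ω ∂μ) * (C * ∫⁻ ω, Θ i ω ∂μ) := by gcongr; exact hΨΘ i
    _ = C * ((∫⁻ ω, {ω | c ω = i}.indicator Φ ω ∂μ) * ∫⁻ ω, Θ i ω ∂μ) := by ring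

/-- The bound produced by the induction in `lintegral_tsum_pow_le_momentBound`, where `C e`
is the decoupling constant for the `(e + 1)`-st power of a summand. -/
def momentBound (C : ℕ → ℝ≥0∞) : ℕ → ℝ≥0∞
  | 0 => 1
  | m + 1 => (m + 1) * 2 ^ m * (C 0 * momentBound C m + C m)

theorem momentBound_ne_top {C : ℕ → ℝ≥0∞} (hC : ∀ e, C e ≠ ⊤) (m : ℕ) : momentBound C m ≠ ⊤ := by
  induction m with
  | zero => simp [momentBound]
  | succ m ih =>
    rw [momentBound]
    exact ENNReal.mul_ne_top (ENNReal.mul_ne_top (by simp) (by simp))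
      (ENNReal.add_ne_top.2 ⟨ENNReal.mul_ne_top (hC 0) ih, hC m⟩)

theorem lintegral_tsum_pow_succ_le {Ω : Type*} [MeasurableSpace Ω] {μ : Measure Ω}
    {g : ℕ → Ω → ℝ≥0∞} (hg : ∀ k, Measurable (g k)) (m : ℕ) :
    ∫⁻ ω, (∑' k, g k ω) ^ (m + 1) ∂μ ≤ (m + 1) * 2 ^ m * ∑' k,
      (∫⁻ ω, (∑ j ∈ Finset.range k, g j ω) ^ m * g k ω ∂μ + ∫⁻ ω, g k ω ^ (m + 1) ∂μ) := by
  have hP : ∀ k, Measurable fun ω => (∑ j ∈ Finset.range k, g j ω) ^ m * g k ω :=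
    fun k => ((Finset.measurable_sum _ fun j _ => hg j).pow_const m).mul (hg k)
  have hterm : ∀ k, Measurable fun ω =>
      (∑ j ∈ Finset.range k, g j ω) ^ m * g k ω + g k ω ^ (m + 1) :=
    fun k => (hP k).add ((hg k).pow_const _)
  calc ∫⁻ ω, (∑' k, g k ω) ^ (m + 1) ∂μ
      ≤ ∫⁻ ω, (m + 1) * 2 ^ m * ∑' k,
          ((∑ j ∈ Finset.range k, g j ω) ^ m * g k ω + g k ω ^ (m + 1)) ∂μ :=
        lintegral_mono fun ω => ENNReal.tsum_pow_succ_le m _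
    _ = _ := by
        rw [lintegral_const_mul _ (Measurable.tsum hterm),
          lintegral_tsum fun k => (hterm k).aemeasurable]
        simp_rw [lintegral_add_left (hP _)]

theorem lintegral_tsum_pow_le_momentBound {Ω : Type*} [MeasurableSpace Ω] {μ : Measure Ω}
    [IsProbabilityMeasure μ] {g χ : ℕ → Ω → ℝ≥0∞} (hg : ∀ k, Measurable (g k))
    (hχ : ∀ k, Measurable (χ k)) (hχ_le : ∀ᵐ ω ∂μ, ∑' k, χ k ω ≤ 1) {C : ℕ → ℝ≥0∞}
    (hdecouple : ∀ e m k, ∫⁻ ω, (∑ j ∈ Finset.range k, g j ω) ^ m * g k ω ^ (e + 1) ∂μ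
      ≤ C e * ∫⁻ ω, (∑ j ∈ Finset.range k, g j ω) ^ m * χ k ω ∂μ) (m : ℕ) :
    ∫⁻ ω, (∑' k, g k ω) ^ m ∂μ ≤ momentBound C m := by
  induction m with
  | zero => simp [momentBound]
  | succ m ih =>
    set P : ℕ → Ω → ℝ≥0∞ := fun k ω => ∑ j ∈ Finset.range k, g j ω
    have hP : ∀ k, Measurable (P k) := fun k => Finset.measurable_sum _ fun j _ => hg j
    have hχ_sum : ∫⁻ ω, ∑' k, χ k ω ∂μ ≤ 1 :=
      (lintegral_mono_ae hχ_le).trans_eq (by simp)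
    have hPχ_sum : ∫⁻ ω, ∑' k, P k ω ^ m * χ k ω ∂μ ≤ momentBound C m := by
      refine le_trans (lintegral_mono_ae (hχ_le.mono fun ω hω => ?_)) ih
      calc ∑' k, P k ω ^ m * χ k ω ≤ ∑' k, (∑' j, g j ω) ^ m * χ k ω := by
            gcongr with k; exact ENNReal.sum_le_tsum _
        _ = (∑' j, g j ω) ^ m * ∑' k, χ k ω := ENNReal.tsum_mul_left
        _ ≤ (∑' j, g j ω) ^ m := mul_le_of_le_one_right' hω
    calc ∫⁻ ω, (∑' k, g k ω) ^ (m + 1) ∂μ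
        ≤ (m + 1) * 2 ^ m * ∑' k, (∫⁻ ω, P k ω ^ m * g k ω ∂μ + ∫⁻ ω, g k ω ^ (m + 1) ∂μ) :=
          lintegral_tsum_pow_succ_le hg m
      _ ≤ (m + 1) * 2 ^ m * ∑' k, (C 0 * ∫⁻ ω, P k ω ^ m * χ k ω ∂μ
            + C m * ∫⁻ ω, χ k ω ∂μ) := by
          gcongr with k
          · simpa using hdecouple 0 m k
          · simpa using hdecouple m 0 k
      _ = (m + 1) * 2 ^ m * (C 0 * ∫⁻ ω, ∑' k, P k ω ^ m * χ k ω ∂μ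
            + C m * ∫⁻ ω, ∑' k, χ k ω ∂μ) := by
          rw [lintegral_tsum (f := fun k ω => P k ω ^ m * χ k ω)
              fun k => (((hP k).pow_const m).mul (hχ k)).aemeasurable,
            lintegral_tsum fun k => (hχ k).aemeasurable, ENNReal.tsum_add,
            ENNReal.tsum_mul_left, ENNReal.tsum_mul_left]
      _ ≤ momentBound C (m + 1) := by
          rw [momentBound]
          gcongr
          exact mul_le_of_le_one_right' hχ_sum

theorem exists_le_mul_of_isBigO_of_antitone {f g : ℝ → ℝ} (hfg : f =O[atTop] g)
    (hg : Antitone g) (hg_pos : ∀ᶠ t in atTop, 0 < g t)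
    (hf_loc : ∀ T > 0, ∃ M, ∀ t ∈ Icc 0 T, f t ≤ M) :
    ∃ K, 0 ≤ K ∧ ∀ t, 0 ≤ t → f t ≤ K * g t := by
  obtain ⟨c, hc⟩ := hfg.bound
  obtain ⟨T, hT⟩ := eventually_atTop.1 ((hc.and hg_pos).and (eventually_gt_atTop 0))
  obtain ⟨⟨-, hgT⟩, hT0⟩ := hT T le_rfl
  obtain ⟨M, hM⟩ := hf_loc T hT0
  set K := max c (max M 0 / g T)
  have hK0 : 0 ≤ K := le_max_of_le_right (div_nonneg (le_max_right _ _) hgT.le)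
  refine ⟨K, hK0, fun t ht => ?_⟩
  rcases le_total T t with hTt | htT
  · obtain ⟨⟨hfg_t, hg_t⟩, -⟩ := hT t hTt
    calc f t ≤ ‖f t‖ := le_abs_self _
      _ ≤ c * ‖g t‖ := hfg_t
      _ = c * g t := by rw [Real.norm_of_nonneg hg_t.le]
      _ ≤ K * g t := by gcongr; exact le_max_left _ _
  · calc f t ≤ max M 0 := (hM t ⟨ht, htT⟩).trans (le_max_left _ _)
      _ = max M 0 / g T * g T := (div_mul_cancel₀ _ hgT.ne').symm
      _ ≤ K * g T := by gcongr; exact le_max_right _ _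
      _ ≤ K * g t := by gcongr; exact hg htT

theorem exists_lintegral_enorm_pow_le_mul_tail {Ω : Type*} [MeasurableSpace Ω] {μ : Measure Ω}
    [IsFiniteMeasure μ] {Z : ℝ → Ω → ℝ} {ζ : Ω → ℝ} {e : ℕ}
    (hint : ∀ t, 0 ≤ t → Integrable (fun ω => |Z t ω| ^ e) μ)
    (hO : (fun t => ∫ ω, |Z t ω| ^ e ∂μ) =O[atTop] fun t => (μ {ω | t < ζ ω}).toReal)
    (hloc : ∀ T > 0, ∃ M, ∀ t ∈ Icc 0 T, ∫ ω, |Z t ω| ^ e ∂μ ≤ M)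
    (htail : ∀ᶠ t in atTop, 0 < (μ {ω | t < ζ ω}).toReal) :
    ∃ C : ℝ≥0∞, C ≠ ⊤ ∧ ∀ v, 0 ≤ v → ∫⁻ ω, ‖Z v ω‖ₑ ^ e ∂μ ≤ C * μ {ω | v < ζ ω} := by
  have hanti : Antitone fun t => (μ {ω | t < ζ ω}).toReal := fun a b hab =>
    ENNReal.toReal_mono (measure_ne_top _ _) (measure_mono fun ω h => hab.trans_lt h)
  obtain ⟨K, hK0, hK⟩ := exists_le_mul_of_isBigO_of_antitone hO hanti htail hloc
  refine ⟨ENNReal.ofReal K, ENNReal.ofReal_ne_top, fun v hv => ?_⟩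
  calc ∫⁻ ω, ‖Z v ω‖ₑ ^ e ∂μ = ENNReal.ofReal (∫ ω, |Z v ω| ^ e ∂μ) := by
        rw [ofReal_integral_eq_lintegral_ofReal (hint v hv) (ae_of_all _ fun ω => by positivity)]
        simp [Real.enorm_eq_ofReal_abs, ENNReal.ofReal_pow]
    _ ≤ ENNReal.ofReal (K * (μ {ω | v < ζ ω}).toReal) := ENNReal.ofReal_le_ofReal (hK v hv)
    _ = ENNReal.ofReal K * μ {ω | v < ζ ω} := by
        rw [ENNReal.ofReal_mul hK0, ENNReal.ofReal_toReal (measure_ne_top _ _)]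

namespace ImmigrationProcess

variable {Ω : Type*} (X : ℕ → ℝ → Ω → ℝ) (ξ : ℕ → Ω → ℝ)

def pathPair (k : ℕ) (ω : Ω) : (ℝ → ℝ) × ℝ := ((fun s => X k s ω), ξ k ω)

abbrev pastSigma (k : ℕ) : MeasurableSpace Ω :=
  ⨆ j ∈ Set.Iio k, MeasurableSpace.comap (pathPair X ξ j) inferInstance

/-- `|X_k(τ(t - S_k))|` on `{S_k ≤ t}`: with `τ = id` the `k`-th summand of `Y(t)` in absolute
value, with `τ = dyadicCeil n` a version that is measurable without joint measurability of `X`. -/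
def term (τ : ℝ → ℝ) (t : ℝ) (k : ℕ) (ω : Ω) : ℝ≥0∞ :=
  if rw ξ k ω ≤ t then ‖X k (τ (t - rw ξ k ω)) ω‖ₑ else 0

def straddle (t : ℝ) (k : ℕ) (ω : Ω) : ℝ≥0∞ :=
  if rw ξ k ω ≤ t ∧ t < rw ξ (k + 1) ω then 1 else 0

theorem ite_mul_ite_le_straddle (n : ℕ) (t : ℝ) (k : ℕ) (ω : Ω) :
    (if rw ξ k ω ≤ t then 1 else 0) * (if dyadicCeil n (t - rw ξ k ω) < ξ k ω then 1 else 0)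
      ≤ straddle ξ t k ω := by
  unfold straddle
  by_cases hSt : rw ξ k ω ≤ t
  · by_cases hξ : dyadicCeil n (t - rw ξ k ω) < ξ k ω
    · have hlt : t < rw ξ (k + 1) ω := by
        have := le_dyadicCeil n (t - rw ξ k ω)
        rw [rw, Finset.sum_range_succ, ← rw]
        linarith
      simp [hSt, hξ, hlt]
    · simp [hξ]
  · simp [hSt]

section Measurability

variable {X ξ}

theorem measurable_term_dyadicCeil {_ : MeasurableSpace Ω} {k : ℕ}
    (hX : ∀ q, Measurable (X k q)) (hS : Measurable (rw ξ k)) (n : ℕ) (t : ℝ) :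
    Measurable (term X ξ (dyadicCeil n) t k) :=
  Measurable.ite (measurableSet_le hS measurable_const)
    (Measurable.comp_dyadicCeil (f := fun q ω => ‖X k q ω‖ₑ)
      (fun q => measurable_enorm.comp (hX q)) (measurable_const.sub hS) n)
    measurable_const

theorem comap_pathPair_le_pastSigma {j k : ℕ} (hjk : j < k) :
    MeasurableSpace.comap (pathPair X ξ j) inferInstance ≤ pastSigma X ξ k :=
  le_iSup₂ (f := fun j (_ : j ∈ Set.Iio k) => MeasurableSpace.comap (pathPair X ξ j) inferInstance)
    j hjk

theorem measurable_X_pastSigma {j k : ℕ} (hjk : j < k) (q : ℝ) :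
    Measurable[pastSigma X ξ k] (X j q) :=
  (((measurable_pi_apply q).comp measurable_fst).comp (comap_measurable (pathPair X ξ j))).mono
    (comap_pathPair_le_pastSigma hjk) le_rfl

theorem measurable_ξ_pastSigma {j k : ℕ} (hjk : j < k) : Measurable[pastSigma X ξ k] (ξ j) :=
  (measurable_snd.comp (comap_measurable (pathPair X ξ j))).mono
    (comap_pathPair_le_pastSigma hjk) le_rfl

theorem measurable_rw_pastSigma {j k : ℕ} (hjk : j ≤ k) : Measurable[pastSigma X ξ k] (rw ξ j) :=
  Finset.measurable_sum _ fun _ hi =>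
    measurable_ξ_pastSigma ((Finset.mem_range.1 hi).trans_le hjk)

variable [MeasurableSpace Ω]

theorem measurable_pathPair (hmX : ∀ k t, Measurable (X k t)) (hmξ : ∀ k, Measurable (ξ k))
    (k : ℕ) : Measurable (pathPair X ξ k) :=
  (measurable_pi_lambda _ fun s => hmX k s).prodMk (hmξ k)

theorem pastSigma_le (hmX : ∀ k t, Measurable (X k t)) (hmξ : ∀ k, Measurable (ξ k)) (k : ℕ) :
    pastSigma X ξ k ≤ ‹MeasurableSpace Ω› :=
  iSup₂_le fun j _ => (measurable_pathPair hmX hmξ j).comap_le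

theorem measurable_rw (hmξ : ∀ k, Measurable (ξ k)) (k : ℕ) : Measurable (rw ξ k) :=
  Finset.measurable_sum _ fun i _ => hmξ i

theorem measurable_straddle (hmξ : ∀ k, Measurable (ξ k)) (t : ℝ) (k : ℕ) :
    Measurable (straddle ξ t k) :=
  Measurable.ite ((measurableSet_le (measurable_rw hmξ k) measurable_const).inter
    (measurableSet_lt measurable_const (measurable_rw hmξ (k + 1))))
    measurable_const measurable_const

end Measurability

section Decoupling

variable {X ξ} [MeasurableSpace Ω] {μ : Measure Ω}

theorem indep_pastSigma (hmX : ∀ k t, Measurable (X k t)) (hmξ : ∀ k, Measurable (ξ k))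
    (hindep : iIndepFun (pathPair X ξ) μ) (k : ℕ) :
    Indep (pastSigma X ξ k) (MeasurableSpace.comap (pathPair X ξ k) inferInstance) μ := by
  have h := indep_iSup_of_disjoint (fun j => (measurable_pathPair hmX hmξ j).comap_le)
    ((iIndepFun_iff_iIndep _ _ _).1 hindep) (S := Set.Iio k) (T := {k}) (by simp)
  rwa [iSup_singleton] at h

theorem lintegral_enorm_pow_le_mul_tail (hmξ : ∀ k, Measurable (ξ k))
    (hident : ∀ k, IdentDistrib (pathPair X ξ k) (pathPair X ξ 0) μ μ) {e : ℕ} {C : ℝ≥0∞}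
    (hmom : ∀ v, 0 ≤ v → ∫⁻ ω, ‖X 0 v ω‖ₑ ^ (e + 1) ∂μ ≤ C * μ {ω | v < ξ 0 ω})
    (k : ℕ) {v : ℝ} (hv : 0 ≤ v) :
    ∫⁻ ω, ‖X k v ω‖ₑ ^ (e + 1) ∂μ ≤ C * ∫⁻ ω, {ω | v < ξ k ω}.indicator 1 ω ∂μ := by
  have hΨ : Measurable fun p : (ℝ → ℝ) × ℝ => ‖p.1 v‖ₑ ^ (e + 1) :=
    (measurable_enorm.comp ((measurable_pi_apply v).comp measurable_fst)).pow_const _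
  have hΨeq := ((hident k).comp hΨ).lintegral_eq
  have hΘeq := (hident k).measure_mem_eq
    (measurableSet_lt (f := fun _ => v) measurable_const measurable_snd)
  simp only [Function.comp_apply, Set.preimage_ofPred_eq, pathPair] at hΨeq hΘeq
  rw [lintegral_indicator_one (measurableSet_lt measurable_const (hmξ k)), hΨeq, hΘeq]
  exact hmom v hv

theorem lintegral_mul_term_pow_le (hmX : ∀ k t, Measurable (X k t))
    (hmξ : ∀ k, Measurable (ξ k)) (hindep : iIndepFun (pathPair X ξ) μ)
    (hident : ∀ k, IdentDistrib (pathPair X ξ k) (pathPair X ξ 0) μ μ) {e : ℕ} {C : ℝ≥0∞}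
    (hmom : ∀ v, 0 ≤ v → ∫⁻ ω, ‖X 0 v ω‖ₑ ^ (e + 1) ∂μ ≤ C * μ {ω | v < ξ 0 ω})
    {k : ℕ} {Φ : Ω → ℝ≥0∞} (hΦ : Measurable[pastSigma X ξ k] Φ) (n : ℕ) (t : ℝ) :
    ∫⁻ ω, Φ ω * term X ξ (dyadicCeil n) t k ω ^ (e + 1) ∂μ
      ≤ C * ∫⁻ ω, Φ ω * straddle ξ t k ω ∂μ := by
  have hS : Measurable[pastSigma X ξ k] (rw ξ k) := measurable_rw_pastSigma le_rfl
  have hmeas_k : ∀ q, Measurable[MeasurableSpace.comap (pathPair X ξ k) inferInstance] (X k q) :=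
    fun q => ((measurable_pi_apply q).comp measurable_fst).comp (comap_measurable (pathPair X ξ k))
  -- The discretised time `z / 2 ^ n` takes countably many values, so conditioning on it
  -- reduces the claim to the moment hypothesis at each fixed time.
  have key := lintegral_mul_comp_le_of_indep (μ := μ) (pastSigma_le hmX hmξ k)
    (measurable_pathPair hmX hmξ k).comap_le (indep_pastSigma hmX hmξ hindep k)
    (Φ := fun ω => Φ ω * if rw ξ k ω ≤ t then 1 else 0)
    (hΦ.mul (Measurable.ite (measurableSet_le hS measurable_const) measurable_const
      measurable_const))
    (c := fun ω => ⌈(t - rw ξ k ω) * 2 ^ n⌉₊)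
    (Nat.measurable_ceil.comp ((measurable_const.sub hS).mul_const _))
    (Ψ := fun z ω => ‖X k (z / 2 ^ n) ω‖ₑ ^ (e + 1))
    (Θ := fun z ω => {ω | (z : ℝ) / 2 ^ n < ξ k ω}.indicator 1 ω)
    (fun z => (measurable_enorm.comp (hmeas_k _)).pow_const _)
    (fun z => measurable_const.indicator
      (measurableSet_lt measurable_const (measurable_snd.comp (comap_measurable _))))
    fun z => lintegral_enorm_pow_le_mul_tail hmξ hident hmom k (by positivity)
  calc ∫⁻ ω, Φ ω * term X ξ (dyadicCeil n) t k ω ^ (e + 1) ∂μ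
      = ∫⁻ ω, (Φ ω * if rw ξ k ω ≤ t then 1 else 0)
          * ‖X k (⌈(t - rw ξ k ω) * 2 ^ n⌉₊ / 2 ^ n) ω‖ₑ ^ (e + 1) ∂μ :=
        lintegral_congr fun ω => by unfold term dyadicCeil; split_ifs <;> simp
    _ ≤ C * ∫⁻ ω, (Φ ω * if rw ξ k ω ≤ t then 1 else 0)
          * {ω | (⌈(t - rw ξ k ω) * 2 ^ n⌉₊ : ℝ) / 2 ^ n < ξ k ω}.indicator 1 ω ∂μ := key
    _ ≤ C * ∫⁻ ω, Φ ω * straddle ξ t k ω ∂μ := by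
        gcongr C * ?_
        refine lintegral_mono fun ω => ?_
        rw [mul_assoc]
        gcongr Φ ω * ?_
        have h := ite_mul_ite_le_straddle ξ n t k ω
        simp only [Set.indicator_apply, Set.mem_ofPred_eq, Pi.one_apply, dyadicCeil] at h ⊢
        exact h

end Decoupling

section Approximation

variable {X ξ}

theorem tendsto_term_dyadicCeil {k : ℕ} {ω : Ω}
    (hω : ∀ u, ContinuousWithinAt (fun s => X k s ω) (Ici u) u) (t : ℝ) :
    Tendsto (fun n => term X ξ (dyadicCeil n) t k ω) atTop (𝓝 (term X ξ id t k ω)) := by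
  unfold term
  split_ifs with h
  · exact (continuous_enorm.tendsto _).comp
      ((hω _).tendsto.comp (tendsto_dyadicCeil (sub_nonneg.2 h)))
  · exact tendsto_const_nhds

end Approximation

section Moments

variable {X ξ} [MeasurableSpace Ω] {μ : Measure Ω} [IsProbabilityMeasure μ]

theorem lintegral_tsum_term_dyadicCeil_pow_le (hmX : ∀ k t, Measurable (X k t))
    (hmξ : ∀ k, Measurable (ξ k)) (hξ : ∀ k, ∀ᵐ ω ∂μ, 0 ≤ ξ k ω)
    (hindep : iIndepFun (pathPair X ξ) μ)
    (hident : ∀ k, IdentDistrib (pathPair X ξ k) (pathPair X ξ 0) μ μ) {C : ℕ → ℝ≥0∞}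
    (hmom : ∀ e v, 0 ≤ v → ∫⁻ ω, ‖X 0 v ω‖ₑ ^ (e + 1) ∂μ ≤ C e * μ {ω | v < ξ 0 ω})
    (n : ℕ) (t : ℝ) (l : ℕ) :
    ∫⁻ ω, (∑' k, term X ξ (dyadicCeil n) t k ω) ^ l ∂μ ≤ momentBound C l := by
  refine lintegral_tsum_pow_le_momentBound
    (fun k => measurable_term_dyadicCeil (hmX k) (measurable_rw hmξ k) n t)
    (measurable_straddle hmξ t) ?_
    (fun e m k => lintegral_mul_term_pow_le hmX hmξ hindep hident (hmom e) ?_ n t) l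
  · filter_upwards [ae_all_iff.2 hξ] with ω hω
    exact Monotone.tsum_ite_mem_Ico_le_one
      (monotone_nat_of_le_succ fun k => by simp [rw, Finset.sum_range_succ, hω k]) t
  · exact (Finset.measurable_sum _ fun j hj => measurable_term_dyadicCeil
      (measurable_X_pastSigma (Finset.mem_range.1 hj))
      (measurable_rw_pastSigma (Finset.mem_range.1 hj).le) n t).pow_const m

theorem lintegral_enorm_tsum_pow_le (hmX : ∀ k t, Measurable (X k t))
    (hmξ : ∀ k, Measurable (ξ k)) (hξ : ∀ k, ∀ᵐ ω ∂μ, 0 ≤ ξ k ω)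
    (hright : ∀ k, ∀ᵐ ω ∂μ, ∀ u, ContinuousWithinAt (fun s => X k s ω) (Ici u) u)
    (hindep : iIndepFun (pathPair X ξ) μ)
    (hident : ∀ k, IdentDistrib (pathPair X ξ k) (pathPair X ξ 0) μ μ) {C : ℕ → ℝ≥0∞}
    (hmom : ∀ e v, 0 ≤ v → ∫⁻ ω, ‖X 0 v ω‖ₑ ^ (e + 1) ∂μ ≤ C e * μ {ω | v < ξ 0 ω})
    (t : ℝ) (l : ℕ) :
    ∫⁻ ω, ‖∑' k, (if rw ξ k ω ≤ t then X k (t - rw ξ k ω) ω else 0)‖ₑ ^ l ∂μ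
      ≤ momentBound C l := by
  have hterm : ∀ ω, ‖∑' k, (if rw ξ k ω ≤ t then X k (t - rw ξ k ω) ω else 0)‖ₑ
      ≤ ∑' k, term X ξ id t k ω := fun ω =>
    enorm_tsum_le_tsum_enorm.trans_eq (tsum_congr fun k => by unfold term; split_ifs <;> simp)
  have hfatou : ∀ᵐ ω ∂μ, (∑' k, term X ξ id t k ω) ^ l
      ≤ atTop.liminf fun n => (∑' k, term X ξ (dyadicCeil n) t k ω) ^ l := by
    filter_upwards [ae_all_iff.2 hright] with ω hω
    calc (∑' k, term X ξ id t k ω) ^ l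
        = (∑' k, atTop.liminf fun n => term X ξ (dyadicCeil n) t k ω) ^ l := by
          rw [tsum_congr fun k => ((tendsto_term_dyadicCeil (hω k) t).liminf_eq).symm]
      _ ≤ (atTop.liminf fun n => ∑' k, term X ξ (dyadicCeil n) t k ω) ^ l := by
          gcongr; exact ENNReal.tsum_liminf_le_liminf_tsum _
      _ = atTop.liminf fun n => (∑' k, term X ξ (dyadicCeil n) t k ω) ^ l :=
          (Monotone.map_liminf_of_continuousAt (f := fun x : ℝ≥0∞ => x ^ l)
            (fun _ _ h => pow_le_pow_left' h l) _ (ENNReal.continuous_pow l).continuousAt)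
  calc ∫⁻ ω, ‖∑' k, (if rw ξ k ω ≤ t then X k (t - rw ξ k ω) ω else 0)‖ₑ ^ l ∂μ
      ≤ ∫⁻ ω, (∑' k, term X ξ id t k ω) ^ l ∂μ := lintegral_mono fun ω => by gcongr; exact hterm ω
    _ ≤ ∫⁻ ω, atTop.liminf (fun n => (∑' k, term X ξ (dyadicCeil n) t k ω) ^ l) ∂μ :=
        lintegral_mono_ae hfatou
    _ ≤ atTop.liminf fun n => ∫⁻ ω, (∑' k, term X ξ (dyadicCeil n) t k ω) ^ l ∂μ :=
        lintegral_liminf_le fun n => (Measurable.tsum fun k =>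
          measurable_term_dyadicCeil (hmX k) (measurable_rw hmξ k) n t).pow_const l
    _ ≤ momentBound C l := by
        refine (liminf_le_liminf (.of_forall fun n => ?_)).trans_eq (liminf_const _)
        exact lintegral_tsum_term_dyadicCeil_pow_le hmX hmξ hξ hindep hident hmom n t l

end Moments

end ImmigrationProcess

theorem statement14_general
    {Ω : Type*} [MeasureSpace Ω] [IsProbabilityMeasure (ℙ : Measure Ω)]
    (X : ℕ → ℝ → Ω → ℝ) (ξ : ℕ → Ω → ℝ)
    (hmX : ∀ k t, Measurable (X k t))
    (hmξ : ∀ k, Measurable (ξ k))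
    (hξpos : ∀ k, ∀ᵐ ω ∂ℙ, 0 < ξ k ω)
    (hpath : ∀ k, ∀ᵐ ω ∂ℙ, Cadlag (fun t => X k t ω))
    (hindep : iIndepFun (m := fun _ : ℕ => (inferInstance : MeasurableSpace ((ℝ → ℝ) × ℝ)))
      (fun k ω => ((fun t => X k t ω), ξ k ω)) ℙ)
    (hident : ∀ k : ℕ, IdentDistrib (fun ω => ((fun t => X k t ω), ξ k ω))
      (fun ω => ((fun t => X 0 t ω), ξ 0 ω)) ℙ ℙ)
    (α : ℝ) (ℓξ : ℝ → ℝ)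
    (hA1 : Tendsto (fun t => (ℙ {ω | t < ξ 0 ω}).toReal / (t ^ (-α) * ℓξ t)) atTop (nhds 1))
    (hint : ∀ (l : ℕ) (t : ℝ), 0 ≤ t → Integrable (fun ω => |X 0 t ω| ^ l) ℙ)
    (hmomO : ∀ l : ℕ, 1 ≤ l →
      (fun t => ∫ ω, |X 0 t ω| ^ l ∂ℙ) =O[atTop] (fun t => (ℙ {ω | t < ξ 0 ω}).toReal))
    (hmomloc : ∀ l : ℕ, 1 ≤ l → ∀ T > (0:ℝ), ∃ M : ℝ, ∀ t ∈ Icc (0:ℝ) T,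
      (∫ ω, |X 0 t ω| ^ l ∂ℙ) ≤ M) :
    ∀ l : ℕ, 1 ≤ l →
      (fun t => ∫ ω,
          |∑' k : ℕ, if rw ξ k ω ≤ t then X k (t - rw ξ k ω) ω else 0| ^ l ∂ℙ)
        =O[atTop] (fun _ => (1 : ℝ)) := by
  intro l _
  have htail : ∀ᶠ t in atTop, 0 < (ℙ {ω | t < ξ 0 ω}).toReal :=
    (hA1.eventually (eventually_gt_nhds one_pos)).mono fun t ht =>
      ENNReal.toReal_nonneg.lt_of_ne fun h => by rw [← h, zero_div] at ht; exact lt_irrefl 0 ht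
  choose C hC_top hC using fun e : ℕ =>
    exists_lintegral_enorm_pow_le_mul_tail (hint (e + 1))
      (hmomO (e + 1) (by omega)) (hmomloc (e + 1) (by omega)) htail
  have hbound := ImmigrationProcess.lintegral_enorm_tsum_pow_le hmX hmξ
    (fun k => (hξpos k).mono fun _ h => h.le) (fun k => (hpath k).mono fun _ h => h.1)
    hindep hident hC
  refine IsBigO.of_bound (momentBound C l).toReal (.of_forall fun t => ?_)
  rw [norm_one, mul_one, ← toReal_enorm]
  refine ENNReal.toReal_mono (momentBound_ne_top hC_top l)
    ((enorm_integral_le_lintegral_enorm _).trans ?_)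
  simpa using hbound t l

theorem statement14
    {Ω : Type*} [MeasureSpace Ω] [IsProbabilityMeasure (ℙ : Measure Ω)]
    (X : ℕ → ℝ → Ω → ℝ) (ξ : ℕ → Ω → ℝ)
    (hmX : ∀ k t, Measurable (X k t))
    (hmξ : ∀ k, Measurable (ξ k))
    (hξpos : ∀ k, ∀ᵐ ω ∂ℙ, 0 < ξ k ω)
    (hpath : ∀ k, ∀ᵐ ω ∂ℙ, Cadlag (fun t => X k t ω))
    (hindep : iIndepFun (m := fun _ : ℕ => (inferInstance : MeasurableSpace ((ℝ → ℝ) × ℝ)))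
      (fun k ω => ((fun t => X k t ω), ξ k ω)) ℙ)
    (hident : ∀ k : ℕ, IdentDistrib (fun ω => ((fun t => X k t ω), ξ k ω))
      (fun ω => ((fun t => X 0 t ω), ξ 0 ω)) ℙ ℙ)
    (α : ℝ) (hα : 0 < α ∧ α < 1) (ℓξ : ℝ → ℝ) (hℓξ : SlowlyVarying ℓξ)
    (hA1 : Tendsto (fun t => (ℙ {ω | t < ξ 0 ω}).toReal / (t ^ (-α) * ℓξ t)) atTop (nhds 1))
    (hint : ∀ (l : ℕ) (t : ℝ), 0 ≤ t → Integrable (fun ω => |X 0 t ω| ^ l) ℙ)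
    (hmomO : ∀ l : ℕ, 1 ≤ l →
      (fun t => ∫ ω, |X 0 t ω| ^ l ∂ℙ) =O[atTop] (fun t => (ℙ {ω | t < ξ 0 ω}).toReal))
    (hmomloc : ∀ l : ℕ, 1 ≤ l → ∀ T > (0:ℝ), ∃ M : ℝ, ∀ t ∈ Icc (0:ℝ) T,
      (∫ ω, |X 0 t ω| ^ l ∂ℙ) ≤ M) :
    ∀ l : ℕ, 1 ≤ l →
      (fun t => ∫ ω,
          |∑' k : ℕ, if rw ξ k ω ≤ t then X k (t - rw ξ k ω) ω else 0| ^ l ∂ℙ)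
        =O[atTop] (fun _ => (1 : ℝ)) :=
  statement14_general X ξ hmX hmξ hξpos hpath hindep hident α ℓξ hA1 hint hmomO hmomloc
end
end

section
/- Define f:[0,∞)→ℝ by f(t) = 1 + (−1)^{⌊t⌋}/log⌊t⌋ for t ≥ 2 and f(t) = 1 for 0 ≤ t < 2, where ⌊t⌋ is the integer part of t. Then f(t) → 1 as t→∞ (so f is regularly varying at infinity of index ρ = 0), yet for every δ ∈ (0,1] and every integer n ≥ 2, sup_{y∈[0,δ)} |f(2n) − f(2n−y)| ≥ 2/log(2n). Consequently there is no ε > 0 with sup_{y∈[0,δ)} |f(t) − f(t−y)| = O(t^{−ε}) as t→∞; i.e. a regularly varying function need not satisfy the oscillation condition sup_{y∈[0,δ)}|f(t)−f(t−y)| = O(t^{ρ−ε}). -/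
open MeasureTheory ProbabilityTheory Filter Topology Set Asymptotics

noncomputable section

/-! `f t - 1 = (-1) ^ ⌊t⌋ / log ⌊t⌋` tends to `0`, but its sign flips at every integer `k`, so
across `k ≥ 3` the function jumps by `1 / log k + 1 / log (k - 1) ≥ 2 / log k`. Every window
`[0, δ)` sees this jump, and `1 / log t` decays more slowly than any power `t ^ (-ε)`. -/

def altLogFloor (t : ℝ) : ℝ :=
  if t < 2 then 1 else 1 + (-1 : ℝ) ^ ⌊t⌋ / Real.log (⌊t⌋ : ℝ)

lemma altLogFloor_sub_one {t : ℝ} (ht : 2 ≤ t) :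
    altLogFloor t - 1 = (-1 : ℝ) ^ ⌊t⌋ / Real.log (⌊t⌋ : ℝ) := by
  rw [altLogFloor, if_neg ht.not_gt, add_sub_cancel_left]

lemma altLogFloor_intCast_sub_one {k : ℤ} (hk : 2 ≤ k) :
    altLogFloor k - 1 = (-1 : ℝ) ^ k / Real.log k := by
  rw [altLogFloor_sub_one (by exact_mod_cast hk), Int.floor_intCast]

lemma abs_altLogFloor_sub_one_le (t : ℝ) : |altLogFloor t - 1| ≤ 1 / Real.log 2 := by
  have hlog2 : 0 < Real.log 2 := Real.log_pos one_lt_two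
  rcases lt_or_ge t 2 with ht | ht
  · simp [altLogFloor, ht, hlog2.le]
  · have hfloor : (2 : ℝ) ≤ ⌊t⌋ := by exact_mod_cast Int.le_floor.mpr (by exact_mod_cast ht)
    rw [altLogFloor_sub_one ht, abs_div, abs_neg_one_zpow,
      abs_of_pos (Real.log_pos (by linarith))]
    exact one_div_le_one_div_of_le hlog2 (Real.log_le_log two_pos hfloor)

lemma abs_altLogFloor_sub_le (s t : ℝ) : |altLogFloor s - altLogFloor t| ≤ 2 / Real.log 2 :=
  calc |altLogFloor s - altLogFloor t|
      = |(altLogFloor s - 1) - (altLogFloor t - 1)| := by ring_nf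
    _ ≤ |altLogFloor s - 1| + |altLogFloor t - 1| := abs_sub _ _
    _ ≤ 1 / Real.log 2 + 1 / Real.log 2 :=
      add_le_add (abs_altLogFloor_sub_one_le _) (abs_altLogFloor_sub_one_le _)
    _ = 2 / Real.log 2 := by ring

lemma tendsto_altLogFloor : Tendsto altLogFloor atTop (𝓝 1) := by
  have hlog : Tendsto (fun t : ℝ => Real.log (⌊t⌋ : ℝ)) atTop atTop :=
    Real.tendsto_log_atTop.comp (tendsto_intCast_atTop_iff.mpr tendsto_floor_atTop)
  have hsub : Tendsto (fun t => altLogFloor t - 1) atTop (𝓝 0) := by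
    refine squeeze_zero_norm' ?_ (tendsto_inv_atTop_zero.comp hlog)
    filter_upwards [eventually_ge_atTop 2, hlog.eventually_gt_atTop 0] with t ht hpos
    rw [altLogFloor_sub_one ht, Real.norm_eq_abs, abs_div, abs_neg_one_zpow, abs_of_pos hpos,
      one_div, Function.comp_apply]
  simpa using hsub.add_const 1

lemma abs_altLogFloor_intCast_sub {k : ℤ} (hk : 3 ≤ k) {y : ℝ} (hy : y ∈ Ioc (0 : ℝ) 1) :
    |altLogFloor k - altLogFloor (k - y)| = 1 / Real.log k + 1 / Real.log (k - 1) := by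
  have hk' : (3 : ℝ) ≤ k := by exact_mod_cast hk
  have hfloor : ⌊(k : ℝ) - y⌋ = k - 1 := by
    rw [Int.floor_eq_iff]; push_cast; constructor <;> linarith [hy.1, hy.2]
  have hleft : altLogFloor (k - y) - 1 = -((-1 : ℝ) ^ k / Real.log (k - 1)) := by
    rw [altLogFloor_sub_one (by linarith [hy.2]), hfloor, zpow_sub_one₀ (by norm_num)]
    push_cast; ring
  have hdiff : altLogFloor k - altLogFloor (k - y)
      = (-1 : ℝ) ^ k * (1 / Real.log k + 1 / Real.log (k - 1)) := by
    linear_combination altLogFloor_intCast_sub_one (by omega : (2 : ℤ) ≤ k) - hleft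
  have hlog : 0 < Real.log k := Real.log_pos (by linarith)
  have hlog' : 0 < Real.log (k - 1) := Real.log_pos (by linarith)
  rw [hdiff, abs_mul, abs_neg_one_zpow, one_mul, abs_of_pos (by positivity)]

lemma two_div_log_le_abs_altLogFloor_intCast_sub {k : ℤ} (hk : 3 ≤ k) {y : ℝ}
    (hy : y ∈ Ioc (0 : ℝ) 1) :
    2 / Real.log k ≤ |altLogFloor k - altLogFloor (k - y)| := by
  have hk' : (3 : ℝ) ≤ k := by exact_mod_cast hk
  have hlog : Real.log (k - 1) ≤ Real.log k := Real.log_le_log (by linarith) (by linarith)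
  calc 2 / Real.log k = 1 / Real.log k + 1 / Real.log k := by ring
    _ ≤ 1 / Real.log k + 1 / Real.log (k - 1) := by
      gcongr
      exact Real.log_pos (by linarith)
    _ = |altLogFloor k - altLogFloor (k - y)| := (abs_altLogFloor_intCast_sub hk hy).symm

lemma le_biSup_of_forall_le {ι : Type*} {g : ι → ℝ} {M : ℝ} (hg : ∀ i, g i ≤ M) {s : Set ι}
    {i : ι} (hi : i ∈ s) : g i ≤ ⨆ j ∈ s, g j :=
  le_ciSup₂ (f := fun j (_ : j ∈ s) => g j)
    ⟨M, by simpa only [mem_upperBounds, mem_iUnion, mem_range, forall_exists_index] using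
      fun _ j _ h => h ▸ hg j⟩ i hi

lemma two_div_log_le_iSup_abs_altLogFloor_sub {δ : ℝ} (hδ : 0 < δ) {k : ℤ} (hk : 3 ≤ k) :
    2 / Real.log k ≤ ⨆ y ∈ Ico (0 : ℝ) δ, |altLogFloor k - altLogFloor (k - y)| := by
  set y := min (δ / 2) 1
  have hyδ : y ∈ Ico 0 δ := ⟨by positivity, by linarith [min_le_left (δ / 2) 1]⟩
  have hy1 : y ∈ Ioc 0 1 := ⟨by positivity, min_le_right _ _⟩
  exact (two_div_log_le_abs_altLogFloor_intCast_sub hk hy1).trans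
    (le_biSup_of_forall_le (fun y => abs_altLogFloor_sub_le k (k - y)) hyδ)

lemma not_isBigO_rpow_neg_of_div_log_le {g : ℝ → ℝ} {c ε : ℝ} (hc : 0 < c) (hε : 0 < ε)
    (hg : ∀ᶠ n : ℕ in atTop, c / Real.log n ≤ g n) :
    ¬ g =O[atTop] fun t => t ^ (-ε) := by
  intro hO
  have hrpow : (fun t : ℝ => t ^ (-ε)) =o[atTop] fun t => (Real.log t)⁻¹ := by
    refine ((isLittleO_log_rpow_atTop hε).inv_rev ?_).congr' ?_ EventuallyEq.rfl
    · filter_upwards [eventually_gt_atTop 1] with t ht hlog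
      exact absurd hlog (Real.log_pos ht).ne'
    · filter_upwards [eventually_ge_atTop 0] with t ht using (Real.rpow_neg ht ε).symm
  have hsmall := (hO.trans_isLittleO hrpow).comp_tendsto tendsto_natCast_atTop_atTop
  have hlog_pos : ∀ᶠ n : ℕ in atTop, 0 < Real.log n :=
    eventually_atTop.2 ⟨2, fun n hn => Real.log_pos (by exact_mod_cast hn)⟩
  refine hsmall.not_isBigO ?_ (IsBigO.of_bound c⁻¹ ?_)
  · refine (hg.and hlog_pos).frequently.mono fun n ⟨hn, hpos⟩ => ?_
    exact (lt_of_lt_of_le (div_pos hc hpos) hn).ne'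
  · filter_upwards [hg, hlog_pos] with n hn hpos
    have hinv : 0 < (Real.log n)⁻¹ := inv_pos.2 hpos
    rw [Function.comp_apply, Function.comp_apply, Real.norm_of_nonneg hinv.le,
      Real.norm_of_nonneg ((div_pos hc hpos).le.trans hn), le_inv_mul_iff₀ hc]
    simpa [div_eq_mul_inv] using hn

theorem statement18
    (f : ℝ → ℝ)
    (hf : ∀ t : ℝ, f t =
      if t < 2 then 1 else 1 + (-1 : ℝ) ^ ⌊t⌋ / Real.log (⌊t⌋ : ℝ)) :
    Tendsto f atTop (nhds 1) ∧
    (∀ δ : ℝ, 0 < δ → δ ≤ 1 → ∀ n : ℕ, 2 ≤ n →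
      2 / Real.log (2 * (n : ℝ)) ≤
        ⨆ y ∈ Ico (0:ℝ) δ, |f (2 * (n : ℝ)) - f (2 * (n : ℝ) - y)|) ∧
    (∀ δ : ℝ, 0 < δ → δ ≤ 1 →
      ¬ ∃ ε : ℝ, 0 < ε ∧
        (fun t => ⨆ y ∈ Ico (0:ℝ) δ, |f t - f (t - y)|) =O[atTop]
          (fun t : ℝ => t ^ (-ε))) := by
  obtain rfl : f = altLogFloor := funext hf
  have hgap (δ : ℝ) (hδ : 0 < δ) (k : ℕ) (hk : 3 ≤ k) :
      2 / Real.log k ≤ ⨆ y ∈ Ico (0 : ℝ) δ, |altLogFloor k - altLogFloor (k - y)| := by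
    exact_mod_cast two_div_log_le_iSup_abs_altLogFloor_sub hδ (k := k) (by omega)
  refine ⟨tendsto_altLogFloor, fun δ hδ _ n hn => ?_, fun δ hδ _ ⟨ε, hε, hO⟩ => ?_⟩
  · exact_mod_cast hgap δ hδ (2 * n) (by omega)
  · exact not_isBigO_rpow_neg_of_div_log_le two_pos hε (eventually_atTop.2 ⟨3, hgap δ hδ⟩) hO
end
end

section
/- Let f:[0,∞)→ℝ be differentiable with derivative f′ monotone on [t₀,∞) for some t₀ ≥ 0, and suppose f(t) ~ t^ρ ℓ(t) as t→∞ for some ρ ∈ ℝ and slowly varying ℓ. Then for every δ > 0 there exists ε > 0 such that sup_{y∈[0,δ)} |f(t) − f(t−y)| = O(t^{ρ−ε}) as t→∞. (This follows from the mean value theorem together with the monotone density theorem for regularly varying functions.) -/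
open MeasureTheory ProbabilityTheory Filter Topology Set Asymptotics

noncomputable section

/-!
Monotonicity of `f'` squeezes `f'(t)` between the difference quotients of `f` over `[t/2, t]`
and `[t, 2t]`; since `f(2t)/f(t) → 2^ρ` and `f(t/2)/f(t) → 2^(-ρ)`, both are `O(f(t)/t)`
(the monotone density argument). Iterating `f(2t) ≤ 2^(ρ+1/2) f(t)` from a compact window gives
the Potter-type bound `f(t) = O(t^(ρ+1/2))`, hence `f' = O(t^(ρ-1/2))`, and the mean value
theorem on `[t - δ, t]` shows that `ε = 1/2` works.
-/

theorem abs_deriv_le_max_abs_slope {f : ℝ → ℝ} {a t b : ℝ} (hat : a < t) (htb : t < b)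
    (hf : ∀ x ∈ Icc a b, DifferentiableAt ℝ f x)
    (hmono : MonotoneOn (deriv f) (Icc a b) ∨ AntitoneOn (deriv f) (Icc a b)) :
    |deriv f t| ≤ max |slope f a t| |slope f t b| := by
  have hcont : ContinuousOn f (Icc a b) := fun x hx => (hf x hx).continuousAt.continuousWithinAt
  obtain ⟨c₁, ⟨hac₁, hc₁t⟩, hc₁⟩ := exists_deriv_eq_slope' f hat
    (hcont.mono (Icc_subset_Icc_right htb.le))
    fun x hx => (hf x ⟨hx.1.le, hx.2.le.trans htb.le⟩).differentiableWithinAt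
  obtain ⟨c₂, ⟨htc₂, hc₂b⟩, hc₂⟩ := exists_deriv_eq_slope' f htb
    (hcont.mono (Icc_subset_Icc_left hat.le))
    fun x hx => (hf x ⟨hat.le.trans hx.1.le, hx.2.le⟩).differentiableWithinAt
  have hc₁mem : c₁ ∈ Icc a b := ⟨hac₁.le, (hc₁t.trans htb).le⟩
  have htmem : t ∈ Icc a b := ⟨hat.le, htb.le⟩
  have hc₂mem : c₂ ∈ Icc a b := ⟨(hat.trans htc₂).le, hc₂b.le⟩
  rw [← hc₁, ← hc₂]
  rcases hmono with h | h
  · exact abs_le_max_abs_abs (h hc₁mem htmem hc₁t.le) (h htmem hc₂mem htc₂.le)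
  · rw [max_comm]
    exact abs_le_max_abs_abs (h htmem hc₂mem htc₂.le) (h hc₁mem htmem hc₁t.le)

theorem le_of_forall_le_Icc_of_le_comp_two_mul {g : ℝ → ℝ} {T B : ℝ} (hT : 0 < T)
    (hB : ∀ t ∈ Icc T (2 * T), g t ≤ B) (hg : ∀ t ≥ T, g (2 * t) ≤ g t) :
    ∀ t ≥ T, g t ≤ B := by
  have hpow : ∀ n : ℕ, ∀ t, T ≤ t → t ≤ 2 ^ (n + 1) * T → g t ≤ B := by
    intro n
    induction n with
    | zero => exact fun t ht1 ht2 => hB t ⟨ht1, by simpa using ht2⟩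
    | succ n ih =>
      intro t ht1 ht2
      by_cases h : t ≤ 2 * T
      · exact hB t ⟨ht1, h⟩
      · have hhalf := hg (t / 2) (by linarith)
        rw [mul_div_cancel₀ t two_ne_zero] at hhalf
        exact hhalf.trans (ih (t / 2) (by linarith) (by rw [pow_succ] at ht2; linarith))
  intro t ht
  obtain ⟨n, hn⟩ := pow_unbounded_of_one_lt (t / T) one_lt_two
  refine hpow n t ht ?_
  rw [div_lt_iff₀ hT] at hn
  have : (2:ℝ) ^ n ≤ 2 ^ (n + 1) := pow_le_pow_right₀ one_le_two n.le_succ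
  nlinarith

theorem rpow_le_two_rpow_abs_mul_rpow {c t : ℝ} (e : ℝ) (hc0 : 0 < c) (htc : t ≤ 2 * c)
    (hct : c ≤ t) : c ^ e ≤ 2 ^ |e| * t ^ e := by
  rcases le_or_gt 0 e with he | he
  · calc c ^ e ≤ t ^ e := Real.rpow_le_rpow hc0.le hct he
      _ ≤ 2 ^ |e| * t ^ e :=
        le_mul_of_one_le_left (Real.rpow_nonneg (hc0.le.trans hct) e)
          (Real.one_le_rpow one_le_two (abs_nonneg e))
  · calc c ^ e ≤ (t / 2) ^ e := Real.rpow_le_rpow_of_nonpos (by linarith) (by linarith) he.le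
      _ = 2 ^ |e| * t ^ e := by
        rw [abs_of_neg he, Real.rpow_neg zero_le_two, Real.div_rpow (by linarith) zero_le_two,
          div_eq_inv_mul]

theorem isBigO_iSup_abs_sub_of_isBigO_deriv {f : ℝ → ℝ} {e δ : ℝ} (hδ : 0 ≤ δ)
    (hdiff : ∀ᶠ t in atTop, DifferentiableAt ℝ f t)
    (hderiv : deriv f =O[atTop] fun t => t ^ e) :
    (fun t => ⨆ y ∈ Ico 0 δ, |f t - f (t - y)|) =O[atTop] fun t => t ^ e := by
  obtain ⟨C, hC0, hC⟩ := hderiv.exists_pos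
  obtain ⟨T, hT⟩ := eventually_atTop.mp (hdiff.and hC.bound)
  refine IsBigO.of_bound (δ * (C * 2 ^ |e|)) ?_
  filter_upwards [eventually_ge_atTop (T + δ), eventually_ge_atTop (2 * δ),
    eventually_gt_atTop 0] with t htT htδ ht0
  have hte := Real.rpow_pos_of_pos ht0 e
  have hwindow : ∀ x ∈ Icc (t - δ) t,
      DifferentiableAt ℝ f x ∧ ‖deriv f x‖ ≤ C * 2 ^ |e| * t ^ e := by
    intro x hx
    have hx0 : 0 < x := by linarith [hx.1]
    refine ⟨(hT x (by linarith [hx.1])).1, (hT x (by linarith [hx.1])).2.trans ?_⟩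
    rw [Real.norm_of_nonneg (Real.rpow_pos_of_pos hx0 e).le, mul_assoc]
    exact mul_le_mul_of_nonneg_left
      (rpow_le_two_rpow_abs_mul_rpow e hx0 (by linarith [hx.1]) hx.2) hC0.le
  have hB0 : 0 ≤ δ * (C * 2 ^ |e|) * t ^ e :=
    mul_nonneg (mul_nonneg hδ (by positivity)) hte.le
  have hpoint : ∀ y ∈ Ico 0 δ, |f t - f (t - y)| ≤ δ * (C * 2 ^ |e|) * t ^ e := by
    rintro y ⟨hy0, hyδ⟩
    have hmvt := (convex_Icc (t - δ) t).norm_image_sub_le_of_norm_deriv_le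
      (fun x hx => (hwindow x hx).1) (fun x hx => (hwindow x hx).2)
      (show t - y ∈ Icc (t - δ) t by constructor <;> linarith)
      (right_mem_Icc.2 (by linarith))
    rw [sub_sub_cancel, Real.norm_eq_abs, Real.norm_of_nonneg hy0] at hmvt
    calc |f t - f (t - y)| ≤ C * 2 ^ |e| * t ^ e * y := hmvt
      _ ≤ δ * (C * 2 ^ |e|) * t ^ e := by nlinarith [hC0, hte]
  rw [Real.norm_of_nonneg (Real.iSup_nonneg fun y => Real.iSup_nonneg fun _ => abs_nonneg _),
    Real.norm_of_nonneg hte.le]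
  exact Real.iSup_le (fun y => Real.iSup_le (hpoint y) hB0) hB0

def RegularlyVarying (f : ℝ → ℝ) (ρ : ℝ) : Prop :=
  (∀ᶠ t in atTop, 0 < f t) ∧
    ∀ lam : ℝ, 0 < lam → Tendsto (fun t => f (lam * t) / f t) atTop (𝓝 (lam ^ ρ))

theorem RegularlyVarying.of_tendsto_div {f ℓ : ℝ → ℝ} {ρ : ℝ} (hℓ : SlowlyVarying ℓ)
    (hℓpos : ∀ t > (0:ℝ), 0 < ℓ t)
    (hreg : Tendsto (fun t => f t / (t ^ ρ * ℓ t)) atTop (𝓝 1)) : RegularlyVarying f ρ := by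
  have hfpos : ∀ᶠ t in atTop, 0 < f t := by
    filter_upwards [hreg.eventually (eventually_gt_nhds one_pos), eventually_gt_atTop 0]
      with t h ht
    exact (div_pos_iff_of_pos_right (mul_pos (Real.rpow_pos_of_pos ht ρ) (hℓpos t ht))).mp h
  refine ⟨hfpos, fun lam hlam => ?_⟩
  -- f(λt)/f(t) = [f(λt)/((λt)^ρ ℓ(λt))] · [ℓ(λt)/ℓ(t)] · [t^ρ ℓ(t)/f(t)] · λ^ρ
  have hlim := (((hreg.comp (tendsto_id.const_mul_atTop hlam)).mul (hℓ lam hlam)).mul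
    (hreg.inv₀ one_ne_zero)).mul_const (lam ^ ρ)
  rw [inv_one, one_mul, one_mul, one_mul] at hlim
  refine hlim.congr' ?_
  filter_upwards [hfpos, eventually_gt_atTop 0] with t hft ht
  have hℓt := hℓpos t ht
  have hℓlt := hℓpos (lam * t) (mul_pos hlam ht)
  have htρ := Real.rpow_pos_of_pos ht ρ
  have hlamρ := Real.rpow_pos_of_pos hlam ρ
  simp only [Function.comp, id, Real.mul_rpow hlam.le ht.le]
  field_simp

section RegularlyVarying

variable {f : ℝ → ℝ} {ρ : ℝ}

theorem RegularlyVarying.isBigO_slope (hf : RegularlyVarying f ρ) {lam : ℝ} (hlam : 0 < lam) :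
    (fun t => slope f t (lam * t)) =O[atTop] fun t => f t / t := by
  rcases eq_or_ne lam 1 with rfl | hlam1
  · simp only [one_mul, slope_same]
    exact isBigO_zero _ _
  have hratio : (fun t => (lam - 1)⁻¹ * (f (lam * t) / f t - 1)) =O[atTop] fun _ => (1:ℝ) :=
    (((hf.2 lam hlam).sub_const 1).const_mul _).isBigO_one ℝ
  refine (hratio.mul (isBigO_refl (fun t => f t / t) atTop)).congr' ?_ (by simp)
  filter_upwards [hf.1, eventually_gt_atTop 0] with t hft ht
  have : lam - 1 ≠ 0 := sub_ne_zero.2 hlam1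
  rw [slope_def_field, show lam * t - t = (lam - 1) * t by ring]
  field_simp

theorem RegularlyVarying.isBigO_deriv (hf : RegularlyVarying f ρ)
    (hdiff : ∀ᶠ t in atTop, DifferentiableAt ℝ f t) {t₀ : ℝ}
    (hmono : MonotoneOn (deriv f) (Ici t₀) ∨ AntitoneOn (deriv f) (Ici t₀)) :
    deriv f =O[atTop] fun t => f t / t := by
  obtain ⟨T, hT⟩ := eventually_atTop.mp hdiff
  have hslopes := (hf.isBigO_slope (inv_pos.2 two_pos)).norm_left.add
    (hf.isBigO_slope two_pos).norm_left
  refine (IsBigO.of_bound 1 ?_).trans hslopes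
  filter_upwards [eventually_ge_atTop (2 * max T t₀), eventually_gt_atTop 0] with t ht ht0
  have hsub : Icc (2⁻¹ * t) (2 * t) ⊆ Ici (max T t₀) := by
    intro x hx
    rw [mem_Ici]
    linarith [hx.1]
  have hbound := abs_deriv_le_max_abs_slope (a := 2⁻¹ * t) (t := t) (b := 2 * t) (by linarith)
    (by linarith) (fun x hx => hT x (le_of_max_le_left (hsub hx)))
    (hmono.imp (·.mono fun x hx => (le_of_max_le_right (hsub hx) : t₀ ≤ x))
      (·.mono fun x hx => (le_of_max_le_right (hsub hx) : t₀ ≤ x)))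
  rw [slope_comm] at hbound
  rw [one_mul, Real.norm_of_nonneg (add_nonneg (norm_nonneg _) (norm_nonneg _))]
  simp only [Real.norm_eq_abs]
  exact hbound.trans (max_le_add_of_nonneg (abs_nonneg _) (abs_nonneg _))

theorem RegularlyVarying.isBigO_rpow_add (hf : RegularlyVarying f ρ)
    (hcont : ∀ᶠ t in atTop, ContinuousAt f t) {η : ℝ} (hη : 0 < η) :
    f =O[atTop] fun t => t ^ (ρ + η) := by
  set g := fun t => f t / t ^ (ρ + η)
  have hratio : ∀ᶠ t in atTop, f (2 * t) / f t < 2 ^ (ρ + η) := by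
    refine (hf.2 2 two_pos).eventually (eventually_lt_nhds ?_)
    rw [Real.rpow_add two_pos]
    exact lt_mul_of_one_lt_right (by positivity) (Real.one_lt_rpow one_lt_two hη)
  obtain ⟨T, hT⟩ := eventually_atTop.mp
    (hf.1.and (hratio.and (hcont.and (eventually_gt_atTop 0))))
  have hgcont : ContinuousOn g (Icc T (2 * T)) := fun x hx =>
    have hx0 : 0 < x := (hT T le_rfl).2.2.2.trans_le hx.1
    ((hT x hx.1).2.2.1.div (Real.continuousAt_rpow_const x _ (Or.inl hx0.ne'))
      (Real.rpow_pos_of_pos hx0 _).ne').continuousWithinAt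
  obtain ⟨B, hB⟩ := isCompact_Icc.bddAbove_image hgcont
  have hgB := le_of_forall_le_Icc_of_le_comp_two_mul (hT T le_rfl).2.2.2
    (fun t ht => hB (mem_image_of_mem g ht)) fun t ht => by
      obtain ⟨hft, hlt, -, ht0⟩ := hT t ht
      have htρ := Real.rpow_pos_of_pos ht0 (ρ + η)
      simp only [g, Real.mul_rpow zero_le_two ht0.le]
      rw [div_lt_iff₀ hft] at hlt
      rw [div_le_div_iff₀ (by positivity) htρ]
      nlinarith
  refine IsBigO.of_bound B ?_
  filter_upwards [eventually_ge_atTop T] with t ht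
  obtain ⟨hft, -, -, ht0⟩ := hT t ht
  have htρ := Real.rpow_pos_of_pos ht0 (ρ + η)
  rw [Real.norm_of_nonneg hft.le, Real.norm_of_nonneg htρ.le, ← div_le_iff₀ htρ]
  exact hgB t ht

end RegularlyVarying

theorem statement19_general
    (f : ℝ → ℝ) (ρ : ℝ) (ℓ : ℝ → ℝ) (hℓ : SlowlyVarying ℓ)
    (hℓpos : ∀ t > (0:ℝ), 0 < ℓ t)
    (hdiff : ∀ t ≥ (0:ℝ), DifferentiableAt ℝ f t)
    (t₀ : ℝ)
    (hmono : MonotoneOn (deriv f) (Ici t₀) ∨ AntitoneOn (deriv f) (Ici t₀))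
    (hreg : Tendsto (fun t => f t / (t ^ ρ * ℓ t)) atTop (nhds 1)) :
    ∀ δ > (0:ℝ), ∃ ε > (0:ℝ),
      (fun t => ⨆ y ∈ Ico (0:ℝ) δ, |f t - f (t - y)|) =O[atTop]
        (fun t : ℝ => t ^ (ρ - ε)) := by
  intro δ hδ
  have hf := RegularlyVarying.of_tendsto_div hℓ hℓpos hreg
  have hdiff' : ∀ᶠ t in atTop, DifferentiableAt ℝ f t := (eventually_ge_atTop 0).mono hdiff
  have hpotter := hf.isBigO_rpow_add (hdiff'.mono fun _ h => h.continuousAt) one_half_pos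
  have hderiv : deriv f =O[atTop] fun t => t ^ (ρ - 1 / 2) := by
    refine (hf.isBigO_deriv hdiff' hmono).trans <|
      (hpotter.mul (isBigO_refl (fun t : ℝ => t⁻¹) atTop)).congr' (by simp [div_eq_mul_inv]) ?_
    filter_upwards [eventually_gt_atTop 0] with t ht
    rw [← Real.rpow_neg_one, ← Real.rpow_add ht]
    ring_nf
  exact ⟨1 / 2, one_half_pos, isBigO_iSup_abs_sub_of_isBigO_deriv hδ.le hdiff' hderiv⟩

theorem statement19
    (f : ℝ → ℝ) (ρ : ℝ) (ℓ : ℝ → ℝ) (hℓ : SlowlyVarying ℓ)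
    (hℓpos : ∀ t > (0:ℝ), 0 < ℓ t)
    (hdiff : ∀ t ≥ (0:ℝ), DifferentiableAt ℝ f t)
    (t₀ : ℝ) (ht₀ : 0 ≤ t₀)
    (hmono : MonotoneOn (deriv f) (Ici t₀) ∨ AntitoneOn (deriv f) (Ici t₀))
    (hreg : Tendsto (fun t => f t / (t ^ ρ * ℓ t)) atTop (nhds 1)) :
    ∀ δ > (0:ℝ), ∃ ε > (0:ℝ),
      (fun t => ⨆ y ∈ Ico (0:ℝ) δ, |f t - f (t - y)|) =O[atTop]
        (fun t : ℝ => t ^ (ρ - ε)) :=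
  statement19_general f ρ ℓ hℓ hℓpos hdiff t₀ hmono hreg
end
end
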